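/- arXiv:1904.11316 — 9 statements merged into one kernel-verified Lean document; each statement's English description precedes it below -/
import Mathlib

section
/- Let E be a real inner product space, let f : E → ℝ be convex and differentiable with β-Lipschitz gradient (β > 0), and let 0 ≤ α ≤ 2/β. Then the gradient update map G(w) = w − α∇f(w) is 1-expansive, i.e. ‖G(w) − G(w')‖ ≤ ‖w − w'‖ for all w, w' ∈ E. -/
/-!
Along a line, convexity gives the lower bound `f y ≥ f x + ⟪∇f x, y - x⟫` and `β`-smoothness the
upper bound `f y ≤ f x + ⟪∇f x, y - x⟫ + β/2 ‖y - x‖²`. Combining the two at a well-chosen point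
and symmetrising yields co-coercivity (Baillon–Haddad)
`‖∇f x - ∇f y‖² ≤ β ⟪∇f x - ∇f y, x - y⟫`, and expanding `‖(x - y) - α (∇f x - ∇f y)‖²`
shows that this makes the gradient step nonexpansive as soon as `α β ≤ 2`.
-/

open RealInnerProductSpace Set
open AffineMap (lineMap hasDerivAt_lineMap lineMap_apply_zero lineMap_apply_one
  lineMap_apply_module')

section Gradient

variable {E : Type*} [NormedAddCommGroup E] [InnerProductSpace ℝ E] {f : E → ℝ} {f' : E → E}

theorem HasFDerivAt.hasDerivAt_comp_lineMap {g x y : E} {t : ℝ}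
    (hf : HasFDerivAt f (InnerProductSpace.toDualMap ℝ E g) (lineMap x y t)) :
    HasDerivAt (f ∘ (lineMap x y : ℝ → E)) ⟪g, y - x⟫ t :=
  hf.comp_hasDerivAt t hasDerivAt_lineMap

theorem ConvexOn.inner_le_sub_of_hasFDerivAt {s : Set E} {g x y : E} (hconv : ConvexOn ℝ s f)
    (hx : x ∈ s) (hy : y ∈ s) (hf : HasFDerivAt f (InnerProductSpace.toDualMap ℝ E g) x) :
    ⟪g, y - x⟫ ≤ f y - f x := by
  have hline := hconv.comp_affineMap (lineMap x y : ℝ →ᵃ[ℝ] E)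
  have hderiv : HasDerivAt (f ∘ (lineMap x y : ℝ → E)) ⟪g, y - x⟫ 0 :=
    HasFDerivAt.hasDerivAt_comp_lineMap (by rwa [lineMap_apply_zero])
  simpa [slope_def_field] using
    hline.le_slope_of_hasDerivAt (by simpa) (by simpa) zero_lt_one hderiv

theorem le_add_deriv_add_half_of_deriv_sub_le {φ φ' : ℝ → ℝ} {L : ℝ}
    (hφ : ∀ t ∈ Icc (0 : ℝ) 1, HasDerivAt φ (φ' t) t)
    (hbound : ∀ t ∈ Ioo (0 : ℝ) 1, φ' t - φ' 0 ≤ L * t) :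
    φ 1 ≤ φ 0 + φ' 0 + L / 2 := by
  set ψ : ℝ → ℝ := fun t => φ t - t * φ' 0 - L / 2 * t ^ 2
  have hψ : ∀ t ∈ Icc (0 : ℝ) 1, HasDerivAt ψ (φ' t - φ' 0 - L * t) t := fun t ht => by
    have := ((hφ t ht).sub (hasDerivAt_mul_const (φ' 0))).sub
      ((hasDerivAt_pow 2 t).const_mul (L / 2))
    exact this.congr_deriv (by ring)
  have hanti : AntitoneOn ψ (Icc 0 1) := by
    refine antitoneOn_of_hasDerivWithinAt_nonpos (convex_Icc 0 1)
      (fun t ht => (hψ t ht).continuousAt.continuousWithinAt)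
      (fun t ht => (hψ t (interior_subset ht)).hasDerivWithinAt) (fun t ht => ?_)
    rw [interior_Icc] at ht
    linarith [hbound t ht]
  have := hanti (left_mem_Icc.2 zero_le_one) (right_mem_Icc.2 zero_le_one) zero_le_one
  simp only [ψ] at this
  linarith

variable {β : ℝ}

theorem le_add_inner_add_of_lipschitz_gradient
    (hf : ∀ x, HasFDerivAt f (InnerProductSpace.toDualMap ℝ E (f' x)) x)
    (hlip : ∀ x y, ‖f' x - f' y‖ ≤ β * ‖x - y‖) (x y : E) :
    f y ≤ f x + ⟪f' x, y - x⟫ + β / 2 * ‖y - x‖ ^ 2 := by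
  have hbound : ∀ t ∈ Ioo (0 : ℝ) 1,
      ⟪f' (lineMap x y t), y - x⟫ - ⟪f' (lineMap x y (0 : ℝ)), y - x⟫ ≤ β * ‖y - x‖ ^ 2 * t := by
    intro t ht
    have hdist : ‖lineMap x y t - x‖ = t * ‖y - x‖ := by
      rw [lineMap_apply_module', add_sub_cancel_right, norm_smul, Real.norm_of_nonneg ht.1.le]
    calc ⟪f' (lineMap x y t), y - x⟫ - ⟪f' (lineMap x y (0 : ℝ)), y - x⟫
        = ⟪f' (lineMap x y t) - f' x, y - x⟫ := by rw [lineMap_apply_zero, inner_sub_left]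
      _ ≤ ‖f' (lineMap x y t) - f' x‖ * ‖y - x‖ := real_inner_le_norm _ _
      _ ≤ β * ‖lineMap x y t - x‖ * ‖y - x‖ := by gcongr; exact hlip _ _
      _ = β * ‖y - x‖ ^ 2 * t := by rw [hdist]; ring
  simpa [lineMap_apply_zero, lineMap_apply_one, mul_div_right_comm] using
    le_add_deriv_add_half_of_deriv_sub_le
      (fun t _ => (hf (lineMap x y t)).hasDerivAt_comp_lineMap) hbound

theorem ConvexOn.add_inner_add_sq_norm_sub_le (hβ : 0 < β) (hconv : ConvexOn ℝ univ f)
    (hf : ∀ x, HasFDerivAt f (InnerProductSpace.toDualMap ℝ E (f' x)) x)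
    (hlip : ∀ x y, ‖f' x - f' y‖ ≤ β * ‖x - y‖) (x y : E) :
    f y + ⟪f' y, x - y⟫ + ‖f' x - f' y‖ ^ 2 / (2 * β) ≤ f x := by
  set d := f' x - f' y with hd
  -- `z` is the gradient step from `x` for `f - ⟪f' y, ·⟫`, which is minimal at `y`.
  set z := x - β⁻¹ • d
  have hbelow := hconv.inner_le_sub_of_hasFDerivAt (mem_univ y) (mem_univ z) (hf y)
  have habove := le_add_inner_add_of_lipschitz_gradient hf hlip x z
  have hzx : z - x = -(β⁻¹ • d) := by simp [z]
  have hzy : z - y = (x - y) - β⁻¹ • d := by simp only [z]; abel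
  rw [hzx, inner_neg_right, real_inner_smul_right, norm_neg, norm_smul,
    Real.norm_of_nonneg (inv_nonneg.2 hβ.le)] at habove
  rw [hzy, inner_sub_right, real_inner_smul_right] at hbelow
  have hgap : β⁻¹ * ⟪f' x, d⟫ - β⁻¹ * ⟪f' y, d⟫ = 2 * (‖d‖ ^ 2 / (2 * β)) := by
    rw [← mul_sub, ← inner_sub_left, ← hd, real_inner_self_eq_norm_sq]
    field_simp
  have hquad : β / 2 * (β⁻¹ * ‖d‖) ^ 2 = ‖d‖ ^ 2 / (2 * β) := by field_simp
  linarith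

theorem ConvexOn.sq_norm_sub_le_inner (hβ : 0 < β) (hconv : ConvexOn ℝ univ f)
    (hf : ∀ x, HasFDerivAt f (InnerProductSpace.toDualMap ℝ E (f' x)) x)
    (hlip : ∀ x y, ‖f' x - f' y‖ ≤ β * ‖x - y‖) (x y : E) :
    ‖f' x - f' y‖ ^ 2 ≤ β * ⟪f' x - f' y, x - y⟫ := by
  have hxy := hconv.add_inner_add_sq_norm_sub_le hβ hf hlip x y
  have hyx := hconv.add_inner_add_sq_norm_sub_le hβ hf hlip y x
  rw [norm_sub_rev] at hyx
  have hinner : ⟪f' x - f' y, x - y⟫ = -⟪f' y, x - y⟫ - ⟪f' x, y - x⟫ := by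
    rw [inner_sub_left, ← neg_sub x y, inner_neg_right]; ring
  have hsum : ‖f' x - f' y‖ ^ 2 / β ≤ ⟪f' x - f' y, x - y⟫ := by
    rw [hinner]; field_simp at hxy hyx ⊢; linarith
  rwa [div_le_iff₀' hβ] at hsum

end Gradient

theorem norm_sub_smul_le_of_sq_norm_le_inner {E : Type*} [NormedAddCommGroup E]
    [InnerProductSpace ℝ E] {d g : E} {α β : ℝ} (hβ : 0 < β) (hα : 0 ≤ α) (hα2 : α ≤ 2 / β)
    (hg : ‖g‖ ^ 2 ≤ β * ⟪g, d⟫) :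
    ‖d - α • g‖ ≤ ‖d‖ := by
  have hαβ : α * β ≤ 2 := by rwa [le_div_iff₀ hβ] at hα2
  have hsq : ‖d - α • g‖ ^ 2 ≤ ‖d‖ ^ 2 := by
    rw [norm_sub_sq_real, real_inner_smul_right, norm_smul, Real.norm_of_nonneg hα, mul_pow,
      real_inner_comm]
    nlinarith [mul_le_mul_of_nonneg_left hg hα, mul_le_mul_of_nonneg_left hαβ (sq_nonneg ‖g‖)]
  exact (sq_le_sq₀ (norm_nonneg _) (norm_nonneg _)).1 hsq

/-- **Lemma 4(b).** Let `E` be a real inner product space, `f : E → ℝ` convex and differentiable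
with `β`-Lipschitz gradient `f'` (`β > 0`), and `0 ≤ α ≤ 2/β`.  Then the gradient update map
`G w = w - α • f' w` is `1`-expansive. -/
theorem sgd_update_nonexpansive_convex_smooth
    {E : Type*} [NormedAddCommGroup E] [InnerProductSpace ℝ E]
    (f : E → ℝ) (f' : E → E) (β α : ℝ) (hβ : 0 < β) (hα : 0 ≤ α) (hα2 : α ≤ 2 / β)
    (hconv : ConvexOn ℝ Set.univ f)
    (hdiff : ∀ x, HasFDerivAt f (InnerProductSpace.toDualMap ℝ E (f' x)) x)
    (hlip : ∀ x y, ‖f' x - f' y‖ ≤ β * ‖x - y‖)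
    (w w' : E) :
    ‖(w - α • f' w) - (w' - α • f' w')‖ ≤ ‖w - w'‖ := by
  have hupdate : (w - α • f' w) - (w' - α • f' w') = (w - w') - α • (f' w - f' w') := by
    rw [smul_sub]; abel
  rw [hupdate]
  exact norm_sub_smul_le_of_sq_norm_le_inner hβ hα hα2
    (hconv.sq_norm_sub_le_inner hβ hdiff hlip w w')
end

section
/- Let E be a real inner product space, let f : E → ℝ be γ-strongly convex and differentiable with β-Lipschitz gradient where 0 < γ ≤ β, and let 0 ≤ α ≤ 2/(β + γ). Then the gradient update map G(w) = w − α∇f(w) is (1 − βγα/(β + γ))-expansive, i.e. ‖G(w) − G(w')‖ ≤ (1 − βγα/(β + γ))·‖w − w'‖ for all w, w' ∈ E. -/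
/-!
Put `v = w - w'` and `d = f' w - f' w'`. The function `g = f - (γ/2)‖·‖²` is convex and, by the
descent lemma for `f`, lies below its tangent paraboloids of curvature `β - γ`; such a function has
a cocoercive gradient, `‖∇g x - ∇g y‖² ≤ (β - γ) ⟪∇g x - ∇g y, x - y⟫`. Substituting
`∇g = f' - γ • id` gives `β γ ‖v‖² + ‖d‖² ≤ (β + γ) ⟪d, v⟫`, and inserting this into the expansion
of `‖v - α • d‖²` together with `α ≤ 2 / (β + γ)` leaves
`‖v - α • d‖² ≤ (1 - 2βγα/(β + γ)) ‖v‖² ≤ (1 - βγα/(β + γ))² ‖v‖²`.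
-/

open Set AffineMap InnerProductSpace
open scoped RealInnerProductSpace

section

variable {E : Type*} [NormedAddCommGroup E] [InnerProductSpace ℝ E]

section Gradient

variable {g : E → ℝ} {g' : E → E} {L : ℝ}

theorem hasDerivAt_comp_lineMap {x y : E} {t : ℝ}
    (hg : HasFDerivAt g (toDualMap ℝ E (g' (lineMap x y t))) (lineMap x y t)) :
    HasDerivAt (fun s : ℝ => g (lineMap x y s)) ⟪g' (lineMap x y t), y - x⟫ t :=
  hg.comp_hasDerivAt t hasDerivAt_lineMap

theorem ConvexOn.add_inner_sub_le (hconv : ConvexOn ℝ univ g) {x : E}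
    (hg : HasFDerivAt g (toDualMap ℝ E (g' x)) x) (y : E) :
    g x + ⟪g' x, y - x⟫ ≤ g y := by
  have hline : ConvexOn ℝ univ (fun s : ℝ => g (lineMap x y s)) :=
    hconv.comp_affineMap (lineMap x y)
  have := hline.le_slope_of_hasDerivAt (mem_univ 0) (mem_univ 1) zero_lt_one
    (hasDerivAt_comp_lineMap (by simpa using hg))
  simp only [lineMap_apply_zero, slope_def_field, lineMap_apply_one] at this
  linarith

theorem le_add_inner_sub_add_of_lipschitz (hg : ∀ x, HasFDerivAt g (toDualMap ℝ E (g' x)) x)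
    (hlip : ∀ x y, ‖g' x - g' y‖ ≤ L * ‖x - y‖) (x y : E) :
    g y ≤ g x + ⟪g' x, y - x⟫ + L / 2 * ‖y - x‖ ^ 2 := by
  set φ : ℝ → ℝ := fun t => g (lineMap x y t) - t * ⟪g' x, y - x⟫ - L / 2 * t ^ 2 * ‖y - x‖ ^ 2
  have hφ : ∀ t, HasDerivAt φ
      (⟪g' (lineMap x y t), y - x⟫ - ⟪g' x, y - x⟫ - L * t * ‖y - x‖ ^ 2) t := fun t =>
    (((hasDerivAt_comp_lineMap (x := x) (y := y) (hg _)).sub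
      ((hasDerivAt_id t).mul_const _)).sub
      (((hasDerivAt_pow 2 t).const_mul (L / 2)).mul_const _)).congr_deriv (by ring)
  have hanti : AntitoneOn φ (Icc 0 1) := by
    refine antitoneOn_of_hasDerivWithinAt_nonpos (convex_Icc 0 1)
      (fun t _ => (hφ t).continuousAt.continuousWithinAt) (fun t _ => (hφ t).hasDerivWithinAt) ?_
    intro t ht
    rw [interior_Icc] at ht
    have hdist : ‖lineMap x y t - x‖ = t * ‖y - x‖ := by
      rw [← dist_eq_norm, dist_lineMap_left, Real.norm_of_nonneg ht.1.le, dist_eq_norm']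
    rw [sub_nonpos]
    calc ⟪g' (lineMap x y t), y - x⟫ - ⟪g' x, y - x⟫ = ⟪g' (lineMap x y t) - g' x, y - x⟫ :=
          (inner_sub_left _ _ _).symm
      _ ≤ ‖g' (lineMap x y t) - g' x‖ * ‖y - x‖ := real_inner_le_norm _ _
      _ ≤ L * (t * ‖y - x‖) * ‖y - x‖ := by
          rw [← hdist]; exact mul_le_mul_of_nonneg_right (hlip _ _) (norm_nonneg _)
      _ = L * t * ‖y - x‖ ^ 2 := by ring
  have := hanti (left_mem_Icc.2 zero_le_one) (right_mem_Icc.2 zero_le_one) zero_le_one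
  simp only [φ, lineMap_apply_zero, lineMap_apply_one] at this
  linarith

/-- Compare the upper bound at `y` with the lower bound at `x`, both evaluated at
`y - t • (g' y - g' x)`. -/
theorem mul_sq_norm_sub_le_sub_sub_inner (hlower : ∀ x y, g x + ⟪g' x, y - x⟫ ≤ g y)
    (hupper : ∀ x y, g y ≤ g x + ⟪g' x, y - x⟫ + L / 2 * ‖y - x‖ ^ 2) (t : ℝ) (x y : E) :
    t * (1 - L * t / 2) * ‖g' y - g' x‖ ^ 2 ≤ g y - g x - ⟪g' x, y - x⟫ := by
  set h := g' y - g' x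
  have hup := hupper y (y - t • h)
  have hlow := hlower x (y - t • h)
  have hh : ⟪g' y, h⟫ - ⟪g' x, h⟫ = ‖h‖ ^ 2 := by
    rw [← inner_sub_left, real_inner_self_eq_norm_sq]
  rw [sub_sub_cancel_left, inner_neg_right, real_inner_smul_right, norm_neg, norm_smul, mul_pow,
    Real.norm_eq_abs, sq_abs] at hup
  rw [sub_right_comm, inner_sub_right, real_inner_smul_right] at hlow
  linear_combination hup + hlow - t * hh

theorem sq_norm_sub_le_mul_inner (hL : 0 ≤ L) (hlower : ∀ x y, g x + ⟪g' x, y - x⟫ ≤ g y)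
    (hupper : ∀ x y, g y ≤ g x + ⟪g' x, y - x⟫ + L / 2 * ‖y - x‖ ^ 2) (x y : E) :
    ‖g' x - g' y‖ ^ 2 ≤ L * ⟪g' x - g' y, x - y⟫ := by
  have key : ∀ t, t * (2 - L * t) * ‖g' x - g' y‖ ^ 2 ≤ ⟪g' x - g' y, x - y⟫ := by
    intro t
    have hxy := mul_sq_norm_sub_le_sub_sub_inner hlower hupper t x y
    have hyx := mul_sq_norm_sub_le_sub_sub_inner hlower hupper t y x
    rw [norm_sub_rev] at hxy
    have hinner : ⟪g' x - g' y, x - y⟫ = -⟪g' y, x - y⟫ - ⟪g' x, y - x⟫ := by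
      rw [inner_sub_left, ← neg_sub x y, inner_neg_right]; ring
    linarith
  rcases hL.eq_or_lt with rfl | hLpos
  · rw [zero_mul]
    by_contra! hpos
    set a := ‖g' x - g' y‖ ^ 2
    set c := ⟪g' x - g' y, x - y⟫
    have ht : (c + 1) / (2 * a) * (2 - 0 * ((c + 1) / (2 * a))) * a = c + 1 := by
      rw [zero_mul, sub_zero]
      field_simp
    linarith [key ((c + 1) / (2 * a))]
  · have := key L⁻¹
    rwa [mul_inv_cancel₀ hLpos.ne', show (2 : ℝ) - 1 = 1 by norm_num, mul_one,
      inv_mul_le_iff₀ hLpos] at this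

end Gradient

section StronglyConvex

variable {f : E → ℝ} {f' : E → E}

theorem HasFDerivAt.sub_half_mul_sq_norm {x : E} (hf : HasFDerivAt f (toDualMap ℝ E (f' x)) x)
    (γ : ℝ) :
    HasFDerivAt (fun w => f w - γ / 2 * ‖w‖ ^ 2) (toDualMap ℝ E (f' x - γ • x)) x := by
  refine (hf.sub ((hasStrictFDerivAt_norm_sq x).hasFDerivAt.const_mul (γ / 2))).congr_fderiv ?_
  ext u
  simp only [sub_apply, toDualMap_apply_apply, smul_apply, coe_innerSL_apply, nsmul_eq_mul,
    Nat.cast_ofNat, smul_eq_mul, map_sub, map_smul, sub_right_inj]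
  ring

theorem sub_half_mul_sq_norm_sub_sub_inner (γ : ℝ) (x y : E) :
    (f y - γ / 2 * ‖y‖ ^ 2) - (f x - γ / 2 * ‖x‖ ^ 2) - ⟪f' x - γ • x, y - x⟫
      = f y - f x - ⟪f' x, y - x⟫ - γ / 2 * ‖y - x‖ ^ 2 := by
  have hy : ‖y‖ ^ 2 = ‖x‖ ^ 2 + 2 * ⟪x, y - x⟫ + ‖y - x‖ ^ 2 := by
    simpa using norm_add_sq_real x (y - x)
  rw [inner_sub_left, real_inner_smul_left]
  linear_combination (-γ / 2) * hy

theorem mul_sq_norm_add_sq_norm_le_inner_of_convexOn_sub {β γ : ℝ} (hγβ : γ ≤ β)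
    (hsconv : ConvexOn ℝ univ (fun w => f w - γ / 2 * ‖w‖ ^ 2))
    (hdiff : ∀ x, HasFDerivAt f (toDualMap ℝ E (f' x)) x)
    (hlip : ∀ x y, ‖f' x - f' y‖ ≤ β * ‖x - y‖) (x y : E) :
    β * γ * ‖x - y‖ ^ 2 + ‖f' x - f' y‖ ^ 2 ≤ (β + γ) * ⟪f' x - f' y, x - y⟫ := by
  have hg : ∀ x, HasFDerivAt (fun w => f w - γ / 2 * ‖w‖ ^ 2)
      (toDualMap ℝ E (f' x - γ • x)) x := fun x => (hdiff x).sub_half_mul_sq_norm γ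
  have hupper : ∀ x y, f y - γ / 2 * ‖y‖ ^ 2 ≤ (f x - γ / 2 * ‖x‖ ^ 2)
      + ⟪f' x - γ • x, y - x⟫ + (β - γ) / 2 * ‖y - x‖ ^ 2 := fun x y => by
    linarith [sub_half_mul_sq_norm_sub_sub_inner (f := f) (f' := f') γ x y,
      le_add_inner_sub_add_of_lipschitz hdiff hlip x y]
  have hco := sq_norm_sub_le_mul_inner (g' := fun u => f' u - γ • u) (sub_nonneg.2 hγβ)
    (fun x y => hsconv.add_inner_sub_le (g' := fun u => f' u - γ • u) (hg x) y) hupper x y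
  have hnorm : ‖f' x - f' y - γ • (x - y)‖ ^ 2
      = ‖f' x - f' y‖ ^ 2 - 2 * γ * ⟪f' x - f' y, x - y⟫ + γ ^ 2 * ‖x - y‖ ^ 2 := by
    rw [norm_sub_sq_real, real_inner_smul_right, norm_smul, mul_pow, Real.norm_eq_abs, sq_abs]
    ring
  have hinner : ⟪f' x - f' y - γ • (x - y), x - y⟫ = ⟪f' x - f' y, x - y⟫ - γ * ‖x - y‖ ^ 2 := by
    rw [inner_sub_left, real_inner_smul_left, real_inner_self_eq_norm_sq]
  rw [sub_sub_sub_comm, ← smul_sub, hnorm, hinner] at hco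
  linear_combination hco

end StronglyConvex

theorem norm_sub_smul_le_of_mul_sq_norm_add_sq_norm_le_inner {β γ α : ℝ} {v d : E}
    (hS : 0 < β + γ) (hα : 0 ≤ α) (hα2 : α ≤ 2 / (β + γ))
    (h : β * γ * ‖v‖ ^ 2 + ‖d‖ ^ 2 ≤ (β + γ) * ⟪d, v⟫) :
    ‖v - α • d‖ ≤ (1 - β * γ * α / (β + γ)) * ‖v‖ := by
  have hαS : α * (β + γ) ≤ 2 := (le_div_iff₀ hS).1 hα2
  have hq : β * γ * α / (β + γ) ≤ 1 := by
    rw [div_le_one hS]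
    nlinarith [sq_nonneg (β - γ), mul_nonneg hα (sq_nonneg (β - γ))]
  have hinner : 2 * α / (β + γ) * (β * γ * ‖v‖ ^ 2 + ‖d‖ ^ 2) ≤ 2 * α * ⟪d, v⟫ :=
    calc _ ≤ 2 * α / (β + γ) * ((β + γ) * ⟪d, v⟫) := by gcongr
      _ = 2 * α * ⟪d, v⟫ := by field_simp
  have hd : α * (α - 2 / (β + γ)) * ‖d‖ ^ 2 ≤ 0 :=
    mul_nonpos_of_nonpos_of_nonneg (mul_nonpos_of_nonneg_of_nonpos hα (by linarith))
      (sq_nonneg _)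
  have hsq : ‖v - α • d‖ ^ 2 ≤ ((1 - β * γ * α / (β + γ)) * ‖v‖) ^ 2 :=
    calc ‖v - α • d‖ ^ 2 = ‖v‖ ^ 2 - 2 * α * ⟪d, v⟫ + α ^ 2 * ‖d‖ ^ 2 := by
          rw [norm_sub_sq_real, real_inner_smul_right, norm_smul, mul_pow, Real.norm_eq_abs,
            sq_abs, real_inner_comm]
          ring
      _ ≤ ‖v‖ ^ 2 - 2 * α / (β + γ) * (β * γ * ‖v‖ ^ 2 + ‖d‖ ^ 2) + α ^ 2 * ‖d‖ ^ 2 := by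
          linarith
      _ = (1 - 2 * (β * γ * α / (β + γ))) * ‖v‖ ^ 2 + α * (α - 2 / (β + γ)) * ‖d‖ ^ 2 := by
          ring
      _ ≤ ((1 - β * γ * α / (β + γ)) * ‖v‖) ^ 2 := by
          nlinarith [sq_nonneg (β * γ * α / (β + γ) * ‖v‖)]
  exact (pow_le_pow_iff_left₀ (norm_nonneg _) (mul_nonneg (sub_nonneg.2 hq) (norm_nonneg _))
    two_ne_zero).1 hsq

end

/-- **Lemma 4(c).** Let `E` be a real inner product space, `f : E → ℝ` be `γ`-strongly convex and
differentiable with `β`-Lipschitz gradient `f'`, where `0 < γ ≤ β`, and `0 ≤ α ≤ 2/(β + γ)`.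
Then the gradient update map `G w = w - α • f' w` is `(1 - βγα/(β + γ))`-expansive. -/
theorem sgd_update_contractive_strongly_convex_smooth
    {E : Type*} [NormedAddCommGroup E] [InnerProductSpace ℝ E]
    (f : E → ℝ) (f' : E → E) (β γ α : ℝ) (hγ : 0 < γ) (hγβ : γ ≤ β)
    (hα : 0 ≤ α) (hα2 : α ≤ 2 / (β + γ))
    (hsconv : ConvexOn ℝ Set.univ (fun w => f w - γ / 2 * ‖w‖ ^ 2))
    (hdiff : ∀ x, HasFDerivAt f (InnerProductSpace.toDualMap ℝ E (f' x)) x)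
    (hlip : ∀ x y, ‖f' x - f' y‖ ≤ β * ‖x - y‖)
    (w w' : E) :
    ‖(w - α • f' w) - (w' - α • f' w')‖ ≤ (1 - β * γ * α / (β + γ)) * ‖w - w'‖ := by
  have hkey := mul_sq_norm_add_sq_norm_le_inner_of_convexOn_sub hγβ hsconv hdiff hlip w w'
  rw [sub_sub_sub_comm, ← smul_sub]
  exact norm_sub_smul_le_of_mul_sq_norm_add_sq_norm_le_inner (by linarith) hα hα2 hkey
end

section
/- Let E be a real inner product space, Z a type, and ℓ : E → Z → Z → ℝ a pairwise loss differentiable in its first argument with ‖∇ℓ(v, z, z')‖ ≤ L for all v ∈ E and z, z' ∈ Z (gradient taken in the first argument). Fix k ≥ 1, α ≥ 0, points a, a' ∈ Z and families b, b' : Fin k → Z, and define G(v) = v − (α/k)·Σ_{j=1}^{k} ∇ℓ(v, a, b_j) and G'(v) = v − (α/k)·Σ_{j=1}^{k} ∇ℓ(v, a', b'_j). Then for all w, w' ∈ E: (i) ‖G(w) − G'(w')‖ ≤ ‖w − w'‖ + 2αL; and (ii) if moreover G is η-expansive for some η ≥ 0, then ‖G(w) − G'(w')‖ ≤ η·‖w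 − w'‖ + 2αL. In particular ‖G(w) − G'(w')‖ ≤ min(η, 1)·‖w − w'‖ + 2αL. -/
/-!
Each update moves its argument by `α` times an average of `k` gradients of norm at most `L`,
hence by at most `αL`; the first bound is the triangle inequality. For the second, split
`G w - G' w' = (G w - G w') + (G w' - G' w')` and apply the first bound with `w = w'` to the
second term.
-/

open Finset

theorem norm_smul_sum_div_card_le {ι E : Type*} [SeminormedAddCommGroup E] [NormedSpace ℝ E]
    (s : Finset ι) (f : ι → E) {α L : ℝ} (hα : 0 ≤ α) (hL : 0 ≤ L)
    (hf : ∀ i ∈ s, ‖f i‖ ≤ L) :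
    ‖(α / #s) • ∑ i ∈ s, f i‖ ≤ α * L := by
  have hsum : ‖∑ i ∈ s, f i‖ ≤ #s * L := by
    simpa using norm_sum_le_of_le s hf
  rw [norm_smul, Real.norm_of_nonneg (by positivity)]
  rcases s.eq_empty_or_nonempty with rfl | hs
  · simp only [card_empty, Nat.cast_zero, div_zero, zero_mul]
    positivity
  calc α / #s * ‖∑ i ∈ s, f i‖ ≤ α / #s * (#s * L) := by gcongr
    _ = α * L := by field_simp [hs.card_pos.ne']

theorem norm_sub_sub_sub_le {E : Type*} [SeminormedAddCommGroup E] (x y u u' : E) :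
    ‖(x - u) - (y - u')‖ ≤ ‖x - y‖ + (‖u‖ + ‖u'‖) := by
  rw [sub_sub_sub_comm]
  exact (norm_sub_le _ _).trans (add_le_add_right (norm_sub_le _ _) _)

theorem norm_sub_le_of_expansive_of_norm_sub_le {E F : Type*} [SeminormedAddCommGroup E]
    [SeminormedAddCommGroup F] {G G' : E → F} {η δ : ℝ}
    (hG : ∀ v v', ‖G v - G v'‖ ≤ η * ‖v - v'‖) (w w' : E) (hclose : ‖G w' - G' w'‖ ≤ δ) :
    ‖G w - G' w'‖ ≤ η * ‖w - w'‖ + δ :=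
  (norm_sub_le_norm_sub_add_norm_sub _ _ _).trans (add_le_add (hG w w') hclose)

theorem pairwise_sgd_update_diff_different_example_general
    {E : Type*} [NormedAddCommGroup E] [InnerProductSpace ℝ E] {Z : Type*}
    (g : E → Z → Z → E) (L α : ℝ) (hα : 0 ≤ α)
    (k : ℕ)
    (hL : ∀ (v : E) (z z' : Z), ‖g v z z'‖ ≤ L)
    (a a' : Z) (b b' : Fin k → Z) (G G' : E → E)
    (hG : ∀ v, G v = v - (α / k) • ∑ j, g v a (b j))
    (hG' : ∀ v, G' v = v - (α / k) • ∑ j, g v a' (b' j))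
    (w w' : E) :
    ‖G w - G' w'‖ ≤ ‖w - w'‖ + 2 * α * L ∧
      ∀ η : ℝ, 0 ≤ η → (∀ v v', ‖G v - G v'‖ ≤ η * ‖v - v'‖) →
        ‖G w - G' w'‖ ≤ η * ‖w - w'‖ + 2 * α * L ∧
          ‖G w - G' w'‖ ≤ min η 1 * ‖w - w'‖ + 2 * α * L := by
  have hL0 : 0 ≤ L := (norm_nonneg _).trans (hL w a a)
  have hstep : ∀ v c (d : Fin k → Z), ‖(α / k) • ∑ j, g v c (d j)‖ ≤ α * L := fun v c d => by
    simpa using norm_smul_sum_div_card_le univ (fun j => g v c (d j)) hα hL0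
      fun j _ => hL v c (d j)
  have hfar : ∀ v v', ‖G v - G' v'‖ ≤ ‖v - v'‖ + 2 * α * L := fun v v' => by
    rw [hG, hG']
    linarith [norm_sub_sub_sub_le v v' ((α / k) • ∑ j, g v a (b j)) ((α / k) • ∑ j, g v' a' (b' j)),
      hstep v a b, hstep v' a' b']
  refine ⟨hfar w w', fun η _ hexp => ?_⟩
  have hη : ‖G w - G' w'‖ ≤ η * ‖w - w'‖ + 2 * α * L :=
    norm_sub_le_of_expansive_of_norm_sub_le hexp w w' (by simpa using hfar w' w')
  refine ⟨hη, ?_⟩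
  rcases min_choice η 1 with h | h <;> rw [h]
  · exact hη
  · simpa using hfar w w'

/-- **Claim 1 of Lemmas 6/7.** Pairwise-SGD updates built from the same path but possibly
different current examples `a, a'` and previous examples `b, b'` satisfy
`‖G w − G' w'‖ ≤ ‖w − w'‖ + 2αL`, and if `G` is `η`-expansive (`η ≥ 0`) then also
`‖G w − G' w'‖ ≤ min(η,1)·‖w − w'‖ + 2αL` (and `≤ η·‖w − w'‖ + 2αL`). -/
theorem pairwise_sgd_update_diff_different_example
    {E : Type*} [NormedAddCommGroup E] [InnerProductSpace ℝ E] {Z : Type*}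
    (ℓ : E → Z → Z → ℝ) (g : E → Z → Z → E) (L α : ℝ) (hα : 0 ≤ α)
    (k : ℕ) (hk : 1 ≤ k)
    (hdiff : ∀ (v : E) (z z' : Z),
      HasFDerivAt (fun u => ℓ u z z') (InnerProductSpace.toDualMap ℝ E (g v z z')) v)
    (hL : ∀ (v : E) (z z' : Z), ‖g v z z'‖ ≤ L)
    (a a' : Z) (b b' : Fin k → Z) (G G' : E → E)
    (hG : ∀ v, G v = v - (α / k) • ∑ j, g v a (b j))
    (hG' : ∀ v, G' v = v - (α / k) • ∑ j, g v a' (b' j))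
    (w w' : E) :
    ‖G w - G' w'‖ ≤ ‖w - w'‖ + 2 * α * L ∧
      ∀ η : ℝ, 0 ≤ η → (∀ v v', ‖G v - G v'‖ ≤ η * ‖v - v'‖) →
        ‖G w - G' w'‖ ≤ η * ‖w - w'‖ + 2 * α * L ∧
          ‖G w - G' w'‖ ≤ min η 1 * ‖w - w'‖ + 2 * α * L :=
  pairwise_sgd_update_diff_different_example_general g L α hα k hL a a' b b' G G' hG hG' w w'
end

section
/- Let E be a real inner product space, Z a type, and ℓ : E → Z → Z → ℝ a pairwise loss differentiable in its first argument with ‖∇ℓ(v, z, z')‖ ≤ L for all v ∈ E and z, z' ∈ Z (gradient taken in the first argument). Fix k ≥ 1, α ≥ 0, a point a ∈ Z and families b, b' : Fin k → Z, and suppose there is a subset U ⊆ Fin k with card(U) ≤ m such that b_j = b'_j for all j ∉ U. Define G(v) = v − (α/k)·Σ_{j=1}^{k} ∇ℓ(v, a, b_j) and G'(v) = v − (α/k)·Σ_{j=1}^{k} ∇ℓ(v, a, b'_j), and assume G is η-expansive. Then for all w, w' ∈ E: ‖G(w) − G'(w')‖ ≤ η·‖w − w'‖ + (m/k)·2αL.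 -/
/-!
The two updates differ in two ways: through the argument (`w` versus `w'`) and through the
previous examples (`b` versus `b'`). Passing through the intermediate point `G w'`, the first
difference costs `η‖w - w'‖` by expansiveness, and the second is `α/k` times a sum of
gradient differences that vanishes off `U`, each of norm at most `2L`.
-/

open Finset

theorem Finset.sum_sub_sum_eq_sum_sub_of_eq_off {ι M : Type*} [Fintype ι] [AddCommGroup M]
    {f f' : ι → M} (U : Finset ι) (h : ∀ i, i ∉ U → f i = f' i) :
    ∑ i, f i - ∑ i, f' i = ∑ i ∈ U, (f i - f' i) := by
  rw [← sum_sub_distrib]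
  exact (sum_subset (subset_univ U) fun i _ hi => by rw [h i hi, sub_self]).symm

theorem norm_sum_sub_sum_le_of_eq_off {ι E : Type*} [Fintype ι] [SeminormedAddCommGroup E]
    {f f' : ι → E} {L : ℝ} (U : Finset ι) (h : ∀ i, i ∉ U → f i = f' i)
    (hf : ∀ i, ‖f i‖ ≤ L) (hf' : ∀ i, ‖f' i‖ ≤ L) :
    ‖∑ i, f i - ∑ i, f' i‖ ≤ #U * (2 * L) := by
  rw [sum_sub_sum_eq_sum_sub_of_eq_off U h]
  calc ‖∑ i ∈ U, (f i - f' i)‖ ≤ ∑ i ∈ U, ‖f i - f' i‖ := norm_sum_le _ _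
    _ ≤ ∑ _i ∈ U, 2 * L := sum_le_sum fun i _ => by
        linarith [norm_sub_le (f i) (f' i), hf i, hf' i]
    _ = #U * (2 * L) := by rw [sum_const, nsmul_eq_mul]

/-- `g v z z'` stands for the gradient of the loss `ℓ(·, z, z')` at `v`. -/
noncomputable def pairwiseSGDStep {E Z : Type*} [AddCommGroup E] [Module ℝ E]
    (g : E → Z → Z → E) (α : ℝ) {k : ℕ} (a : Z) (b : Fin k → Z) (v : E) : E :=
  v - (α / k) • ∑ j, g v a (b j)

theorem norm_pairwiseSGDStep_sub_le {E Z : Type*} [SeminormedAddCommGroup E]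
    [NormedSpace ℝ E] {g : E → Z → Z → E} {L α : ℝ} (hα : 0 ≤ α)
    (hL : ∀ v z z', ‖g v z z'‖ ≤ L) {k : ℕ} (a : Z) {b b' : Fin k → Z} (U : Finset (Fin k))
    (hbb' : ∀ j, j ∉ U → b j = b' j) (v : E) :
    ‖pairwiseSGDStep g α a b v - pairwiseSGDStep g α a b' v‖ ≤ (#U / k : ℝ) * (2 * α * L) := by
  have hαk : 0 ≤ α / k := by positivity
  have hsum := norm_sum_sub_sum_le_of_eq_off U (fun j hj => congrArg (g v a) (hbb' j hj).symm)
    (fun j => hL v a (b' j)) (fun j => hL v a (b j))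
  rw [pairwiseSGDStep, pairwiseSGDStep, sub_sub_sub_cancel_left, ← smul_sub, norm_smul,
    Real.norm_of_nonneg hαk]
  calc α / k * ‖∑ j, g v a (b' j) - ∑ j, g v a (b j)‖ ≤ α / k * (#U * (2 * L)) :=
        mul_le_mul_of_nonneg_left hsum hαk
    _ = (#U / k : ℝ) * (2 * α * L) := by ring

theorem pairwise_sgd_update_diff_same_example_general
    {E : Type*} [NormedAddCommGroup E] [InnerProductSpace ℝ E] {Z : Type*}
    (g : E → Z → Z → E) (L α : ℝ) (hα : 0 ≤ α)
    (k : ℕ)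
    (hL : ∀ (v : E) (z z' : Z), ‖g v z z'‖ ≤ L)
    (a : Z) (b b' : Fin k → Z) (m : ℕ) (U : Finset (Fin k)) (hU : U.card ≤ m)
    (hbb' : ∀ j, j ∉ U → b j = b' j)
    (G G' : E → E)
    (hG : ∀ v, G v = v - (α / k) • ∑ j, g v a (b j))
    (hG' : ∀ v, G' v = v - (α / k) • ∑ j, g v a (b' j))
    (η : ℝ) (hexp : ∀ v v', ‖G v - G v'‖ ≤ η * ‖v - v'‖)
    (w w' : E) :
    ‖G w - G' w'‖ ≤ η * ‖w - w'‖ + (m / k : ℝ) * (2 * α * L) := by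
  have hL0 : 0 ≤ L := (norm_nonneg _).trans (hL w a a)
  obtain rfl : G = pairwiseSGDStep g α a b := funext hG
  obtain rfl : G' = pairwiseSGDStep g α a b' := funext hG'
  have hstep : ‖pairwiseSGDStep g α a b w' - pairwiseSGDStep g α a b' w'‖ ≤
      (m / k : ℝ) * (2 * α * L) := by
    refine (norm_pairwiseSGDStep_sub_le hα hL a U hbb' w').trans ?_
    gcongr
  exact (norm_sub_le_norm_sub_add_norm_sub _ _ _).trans (add_le_add (hexp w w') hstep)

/-- **Claim 2 of Lemma 6 / claims 2–3 of Lemma 7.** Pairwise-SGD updates built from the same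
current example `a` and previous examples `b, b'` differing on at most `m` indices satisfy
`‖G w − G' w'‖ ≤ η·‖w − w'‖ + (m/k)·2αL` whenever `G` is `η`-expansive. -/
theorem pairwise_sgd_update_diff_same_example
    {E : Type*} [NormedAddCommGroup E] [InnerProductSpace ℝ E] {Z : Type*}
    (ℓ : E → Z → Z → ℝ) (g : E → Z → Z → E) (L α : ℝ) (hα : 0 ≤ α)
    (k : ℕ) (hk : 1 ≤ k)
    (hdiff : ∀ (v : E) (z z' : Z),
      HasFDerivAt (fun u => ℓ u z z') (InnerProductSpace.toDualMap ℝ E (g v z z')) v)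
    (hL : ∀ (v : E) (z z' : Z), ‖g v z z'‖ ≤ L)
    (a : Z) (b b' : Fin k → Z) (m : ℕ) (U : Finset (Fin k)) (hU : U.card ≤ m)
    (hbb' : ∀ j, j ∉ U → b j = b' j)
    (G G' : E → E)
    (hG : ∀ v, G v = v - (α / k) • ∑ j, g v a (b j))
    (hG' : ∀ v, G' v = v - (α / k) • ∑ j, g v a (b' j))
    (η : ℝ) (hexp : ∀ v v', ‖G v - G v'‖ ≤ η * ‖v - v'‖)
    (w w' : E) :
    ‖G w - G' w'‖ ≤ η * ‖w - w'‖ + (m / k : ℝ) * (2 * α * L) :=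
  pairwise_sgd_update_diff_same_example_general g L α hα k hL a b b' m U hU hbb' G G' hG hG' η hexp
    w w'
end

section
/- Let Z be a type, d ≥ 1, and ℓ : ℝ^d → Z → Z → ℝ a pairwise loss differentiable in its first argument with ‖∇ℓ(w, z, z')‖ ≤ L for all w, z, z'. Let S, S' : Fin n → Z be neighboring samples (n ≥ 2), let α_1, …, α_{T−1} ≥ 0 be step sizes, and for each path ξ : Fin T → Fin n let w_t(ξ) and w'_t(ξ) denote the SGD iterates for pairwise learning based on S and S' respectively, with δ_t(ξ) = ‖w_t(ξ) − w'_t(ξ)‖. Fix 1 < t ≤ T and η_t ≥ 0, and assume that for every path ξ both update maps v ↦ v − (α_{t−1}/(t−1))·Σ_{j=1}^{t−1} ∇ℓ(v, S(ξ_t), S(ξ_j)) and v ↦ v − (α_{t−1}/(t−1))·Σ_{j=1}^{t−1} ∇ℓ(v, S'(ξ_t), S'(ξ_j)) are η_t-expansive. Then, under the random selection rule, E_ξ[δ_t] ≤ ((1/n)·min(η_t, 1) + (1 − 1/n)·η_t)·E_ξ[δ_{t−1}] + (4L/n)·α_{t−1}. -/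
/-!
Along a fixed path the two runs differ only through gradient terms that involve the replaced
example `i₀`. Writing `G`, `G'` for the two update maps,
`G v - G' v' = (G v - G v') + (G v' - G' v')`. If the current index is `i₀`, all `t - 1` terms of
the second part may differ, and comparing instead through the plain triangle inequality gives the
factor `min η 1`; otherwise only the terms of earlier visits of `i₀` differ, each by at most `2L`.
Since `δ_{t-1}` does not depend on the current index, which is uniform over `Fin n`, averaging
yields the weight `(1/n)·min η 1 + (1 - 1/n)·η`, and the current and the earlier visits of `i₀`
each contribute `2L α_{t-1} / n` on average.
-/

open Function

theorem sum_ite_eq_add_card_sub_one_mul {β R : Type*} [Fintype β] [DecidableEq β] [CommRing R]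
    (b : β) (x y : R) :
    ∑ a, (if a = b then x else y) = x + (Fintype.card β - 1) * y := by
  rw [Fintype.sum_eq_add_sum_compl b, Finset.sum_ite_of_false fun a ha => by simpa using ha]
  simp [Finset.card_compl, Nat.cast_sub (Fintype.card_pos_iff.2 ⟨b⟩)]

section Resampling

variable {α β : Type*} [Fintype α] [DecidableEq α] [Fintype β]

theorem sum_sum_update_eq_card_nsmul {M : Type*} [AddCommMonoid M] (p : α) (f : (α → β) → M) :
    ∑ ξ, ∑ i, f (update ξ p i) = Fintype.card β • ∑ ξ, f ξ := by
  let e : (α → β) × β ≃ (α → β) × β :=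
    ⟨fun x => (update x.1 p x.2, x.1 p), fun x => (update x.1 p x.2, x.1 p),
      fun x => by simp, fun x => by simp⟩
  rw [← Fintype.sum_prod_type', Fintype.sum_equiv e (fun x => f (update x.1 p x.2)) (fun x => f x.1)
    fun _ => rfl, Fintype.sum_prod_type]
  simp only [Finset.sum_const, Finset.card_univ, Finset.smul_sum]

theorem card_mul_sum_mul_of_update_eq {R : Type*} [CommSemiring R] (p : α) (h : β → R)
    (f : (α → β) → R) (hf : ∀ ξ i, f (update ξ p i) = f ξ) :
    (Fintype.card β : R) * ∑ ξ, h (ξ p) * f ξ = (∑ i, h i) * ∑ ξ, f ξ := by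
  rw [← nsmul_eq_mul, ← sum_sum_update_eq_card_nsmul p, Finset.sum_mul, Finset.sum_comm]
  simp only [update_self, hf, ← Finset.sum_mul, ← Finset.mul_sum]

theorem card_mul_sum_ite_apply_eq [DecidableEq β] {R : Type*} [CommSemiring R] (p : α) (b : β) :
    (Fintype.card β : R) * ∑ ξ : α → β, (if ξ p = b then 1 else 0) =
      (Fintype.card β : R) ^ Fintype.card α := by
  simpa using card_mul_sum_mul_of_update_eq p (fun i => if i = b then (1 : R) else 0) 1
    (fun _ _ => rfl)

theorem card_mul_sum_visits {n T m : ℕ} (hm : m < T) (i₀ : Fin n) :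
    (n : ℝ) * ∑ ξ : Fin T → Fin n, ((if ξ ⟨m, hm⟩ = i₀ then (m : ℝ) else 0) +
      ∑ j : Fin m, if ξ ⟨j, j.isLt.trans hm⟩ = i₀ then 1 else 0) = 2 * m * (n : ℝ) ^ T := by
  have hvisits : ∀ r : Fin T, (n : ℝ) * ∑ ξ : Fin T → Fin n, (if ξ r = i₀ then 1 else 0) =
      (n : ℝ) ^ T := fun r => by
    simpa using card_mul_sum_ite_apply_eq (R := ℝ) r i₀
  calc _ = (m : ℝ) * (n * ∑ ξ : Fin T → Fin n, (if ξ ⟨m, hm⟩ = i₀ then 1 else 0)) +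
        ∑ j : Fin m, (n : ℝ) * ∑ ξ : Fin T → Fin n,
          (if ξ ⟨j, j.isLt.trans hm⟩ = i₀ then 1 else 0) := by
        simp only [Finset.sum_add_distrib, mul_add, Finset.mul_sum, mul_ite, mul_one, mul_zero,
          mul_comm (n : ℝ) (m : ℝ)]
        rw [Finset.sum_comm (s := Finset.univ)]
    _ = 2 * m * (n : ℝ) ^ T := by
        simp only [hvisits, Finset.sum_const, Finset.card_univ, Fintype.card_fin, nsmul_eq_mul]
        ring

end Resampling

section PairwiseStep

variable {E Z : Type*} [NormedAddCommGroup E] [NormedSpace ℝ E]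

def pairwiseStep (g : E → Z → Z → E) (c : ℝ) (z : Z) {m : ℕ} (zs : Fin m → Z) (v : E) : E :=
  v - c • ∑ j, g v z (zs j)

variable {g : E → Z → Z → E} {c : ℝ} {z z' : Z} {m : ℕ} {zs zs' : Fin m → Z}

theorem norm_pairwiseStep_sub_pairwiseStep_le (hc : 0 ≤ c) (v v' : E) :
    ‖pairwiseStep g c z zs v - pairwiseStep g c z' zs' v'‖ ≤
      ‖v - v'‖ + c * ∑ j, ‖g v z (zs j) - g v' z' (zs' j)‖ := by
  have hdiff : pairwiseStep g c z zs v - pairwiseStep g c z' zs' v' =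
      (v - v') - c • ∑ j, (g v z (zs j) - g v' z' (zs' j)) := by
    simp only [pairwiseStep, Finset.sum_sub_distrib, smul_sub]
    abel
  rw [hdiff]
  refine (norm_sub_le _ _).trans (add_le_add le_rfl ?_)
  rw [norm_smul, Real.norm_of_nonneg hc]
  exact mul_le_mul_of_nonneg_left (norm_sum_le _ _) hc

theorem norm_pairwiseStep_sub_pairwiseStep_le_of_expansive (hc : 0 ≤ c) {η : ℝ}
    (hexp : ∀ v v', ‖pairwiseStep g c z zs v - pairwiseStep g c z zs v'‖ ≤ η * ‖v - v'‖)
    (v v' : E) :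
    ‖pairwiseStep g c z zs v - pairwiseStep g c z' zs' v'‖ ≤
      η * ‖v - v'‖ + c * ∑ j, ‖g v' z (zs j) - g v' z' (zs' j)‖ := by
  refine (norm_sub_le_norm_sub_add_norm_sub _ (pairwiseStep g c z zs v') _).trans
    (add_le_add (hexp v v') ?_)
  simpa using norm_pairwiseStep_sub_pairwiseStep_le (zs := zs) (zs' := zs') (g := g) hc v' v'

theorem norm_pairwiseStep_sub_pairwiseStep_le_min (hc : 0 ≤ c) {L η : ℝ}
    (hL : ∀ v z z', ‖g v z z'‖ ≤ L)
    (hexp : ∀ v v', ‖pairwiseStep g c z zs v - pairwiseStep g c z zs v'‖ ≤ η * ‖v - v'‖)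
    (v v' : E) :
    ‖pairwiseStep g c z zs v - pairwiseStep g c z' zs' v'‖ ≤
      min η 1 * ‖v - v'‖ + 2 * L * c * m := by
  have hsum : ∀ u, c * ∑ j, ‖g u z (zs j) - g v' z' (zs' j)‖ ≤ 2 * L * c * m := fun u => calc
    _ ≤ c * ∑ _j : Fin m, 2 * L := by
        refine mul_le_mul_of_nonneg_left (Finset.sum_le_sum fun j _ => ?_) hc
        exact (norm_sub_le _ _).trans (by linarith [hL u z (zs j), hL v' z' (zs' j)])
    _ = 2 * L * c * m := by
        rw [Finset.sum_const, Finset.card_univ, Fintype.card_fin, nsmul_eq_mul]; ring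
  rw [min_mul_of_nonneg _ _ (norm_nonneg _), one_mul, ← min_add_add_right]
  exact le_min
    ((norm_pairwiseStep_sub_pairwiseStep_le_of_expansive hc hexp v v').trans
      (add_le_add le_rfl (hsum v')))
    ((norm_pairwiseStep_sub_pairwiseStep_le hc v v').trans (add_le_add le_rfl (hsum v)))

end PairwiseStep

section Neighboring

variable {E Z : Type*} [NormedAddCommGroup E] [NormedSpace ℝ E]
  {g : E → Z → Z → E} {L c η : ℝ} {n m : ℕ} {S S' : Fin n → Z} {i₀ : Fin n}

theorem norm_pairwiseStep_sub_pairwiseStep_le_of_ne (hL : ∀ v z z', ‖g v z z'‖ ≤ L)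
    (hSS' : ∀ i, i ≠ i₀ → S i = S' i) (hc : 0 ≤ c) {a : Fin n} (ha : a ≠ i₀)
    (ξ : Fin m → Fin n)
    (hexp : ∀ v v', ‖pairwiseStep g c (S a) (fun j => S (ξ j)) v -
      pairwiseStep g c (S a) (fun j => S (ξ j)) v'‖ ≤ η * ‖v - v'‖) (v v' : E) :
    ‖pairwiseStep g c (S a) (fun j => S (ξ j)) v -
        pairwiseStep g c (S' a) (fun j => S' (ξ j)) v'‖ ≤
      η * ‖v - v'‖ + 2 * L * c * ∑ j, if ξ j = i₀ then 1 else 0 := by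
  have hterm : ∀ j, ‖g v' (S a) (S (ξ j)) - g v' (S' a) (S' (ξ j))‖ ≤
      2 * L * if ξ j = i₀ then 1 else 0 := by
    intro j
    split_ifs with hj
    · exact (norm_sub_le _ _).trans (by linarith [hL v' (S a) (S (ξ j)), hL v' (S' a) (S' (ξ j))])
    · simp [hSS' a ha, hSS' _ hj]
  refine (norm_pairwiseStep_sub_pairwiseStep_le_of_expansive hc hexp v v').trans
    (add_le_add le_rfl ?_)
  rw [Finset.mul_sum, Finset.mul_sum]
  refine Finset.sum_le_sum fun j _ => ?_
  calc c * _ ≤ c * (2 * L * if ξ j = i₀ then 1 else 0) := mul_le_mul_of_nonneg_left (hterm j) hc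
    _ = _ := by ring

theorem norm_pairwiseStep_neighbor_le (hL : ∀ v z z', ‖g v z z'‖ ≤ L)
    (hSS' : ∀ i, i ≠ i₀ → S i = S' i) (hc : 0 ≤ c) (a : Fin n) (ξ : Fin m → Fin n)
    (hexp : ∀ v v', ‖pairwiseStep g c (S a) (fun j => S (ξ j)) v -
      pairwiseStep g c (S a) (fun j => S (ξ j)) v'‖ ≤ η * ‖v - v'‖) (v v' : E) :
    ‖pairwiseStep g c (S a) (fun j => S (ξ j)) v -
        pairwiseStep g c (S' a) (fun j => S' (ξ j)) v'‖ ≤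
      (if a = i₀ then min η 1 else η) * ‖v - v'‖ +
        2 * L * c * ((if a = i₀ then (m : ℝ) else 0) + ∑ j, if ξ j = i₀ then 1 else 0) := by
  by_cases ha : a = i₀
  · have hL0 : 0 ≤ L := (norm_nonneg _).trans (hL v (S a) (S a))
    have hvisits : 0 ≤ ∑ j, if ξ j = i₀ then (1 : ℝ) else 0 := by positivity
    rw [if_pos ha, if_pos ha]
    refine (norm_pairwiseStep_sub_pairwiseStep_le_min hc hL hexp v v').trans ?_
    gcongr
    linarith
  · rw [if_neg ha, if_neg ha, zero_add]
    exact norm_pairwiseStep_sub_pairwiseStep_le_of_ne hL hSS' hc ha ξ hexp v v'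

end Neighboring

section Iterates

variable {E Z : Type*} [NormedAddCommGroup E] [NormedSpace ℝ E] {n T : ℕ} (S : Fin n → Z)
  (g : E → Z → Z → E) (α : ℕ → ℝ) (w : (Fin T → Fin n) → ℕ → E) (w₁ : E)
  (hw1 : ∀ ξ, w ξ 1 = w₁)
  (hrec : ∀ (ξ : Fin T → Fin n) (s : ℕ) (hs2 : 2 ≤ s) (hsT : s ≤ T),
    w ξ s = pairwiseStep g (α (s - 1) / ((s : ℝ) - 1)) (S (ξ ⟨s - 1, by omega⟩))
      (fun j : Fin (s - 1) => S (ξ ⟨(j : ℕ), lt_of_lt_of_le j.isLt (by omega)⟩)) (w ξ (s - 1)))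
include hw1 hrec

theorem pairwiseSGD_iterate_eq_of_forall_lt {s : ℕ} (hs1 : 1 ≤ s) (hsT : s ≤ T)
    {ξ ζ : Fin T → Fin n} (hξζ : ∀ j : Fin T, (j : ℕ) < s → ξ j = ζ j) : w ξ s = w ζ s := by
  induction s using Nat.strong_induction_on generalizing ξ ζ with
  | _ s ih =>
    obtain rfl | hs2 := hs1.eq_or_lt
    · rw [hw1, hw1]
    rw [hrec ξ s hs2 hsT, hrec ζ s hs2 hsT,
      ih (s - 1) (by omega) (by omega) (by omega) fun j hj => hξζ j (by omega),
      hξζ _ (by simp only; omega)]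
    congr 2 with j
    exact congrArg S (hξζ _ (by simp only; omega))

theorem pairwiseSGD_iterate_update_eq {s : ℕ} (hs1 : 1 ≤ s) (hsT : s < T)
    (ξ : Fin T → Fin n) (i : Fin n) : w (update ξ ⟨s, hsT⟩ i) s = w ξ s :=
  pairwiseSGD_iterate_eq_of_forall_lt S g α w w₁ hw1 hrec hs1 hsT.le fun j hj =>
    update_of_ne (Fin.ne_of_val_ne (by simp only; omega)) _ _

end Iterates

/-- **Theorem 5 (random selection rule).** Let `w ξ t` and `w' ξ t` be the pairwise-SGD iterates
along the path `ξ` based on two neighboring samples `S, S'`.  If at step `t` both update maps are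
`η`-expansive for every path, then the average of `δ_t = ‖w_t − w'_t‖` over all `n^T` paths
satisfies
`E[δ_t] ≤ ((1/n)·min(η,1) + (1 − 1/n)·η)·E[δ_{t−1}] + (4L/n)·α_{t−1}`. -/
theorem pairwise_sgd_recursive_stability_bound
    {Z : Type*} (d : ℕ) (n T : ℕ) (hn : 2 ≤ n)
    (g : EuclideanSpace ℝ (Fin d) → Z → Z → EuclideanSpace ℝ (Fin d)) (L : ℝ)
    (hL : ∀ (v : EuclideanSpace ℝ (Fin d)) (z z' : Z), ‖g v z z'‖ ≤ L)
    (S S' : Fin n → Z) (i₀ : Fin n) (hSS' : ∀ i, i ≠ i₀ → S i = S' i)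
    (α : ℕ → ℝ) (hα : ∀ s, 0 ≤ α s)
    (w w' : (Fin T → Fin n) → ℕ → EuclideanSpace ℝ (Fin d))
    (hw1 : ∀ ξ, w ξ 1 = 0) (hw1' : ∀ ξ, w' ξ 1 = 0)
    (hrec : ∀ (ξ : Fin T → Fin n) (s : ℕ) (hs2 : 2 ≤ s) (hsT : s ≤ T),
      w ξ s = w ξ (s - 1) - (α (s - 1) / ((s : ℝ) - 1)) •
        ∑ j : Fin (s - 1), g (w ξ (s - 1)) (S (ξ ⟨s - 1, by omega⟩))
          (S (ξ ⟨(j : ℕ), lt_of_lt_of_le j.isLt (by omega)⟩)))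
    (hrec' : ∀ (ξ : Fin T → Fin n) (s : ℕ) (hs2 : 2 ≤ s) (hsT : s ≤ T),
      w' ξ s = w' ξ (s - 1) - (α (s - 1) / ((s : ℝ) - 1)) •
        ∑ j : Fin (s - 1), g (w' ξ (s - 1)) (S' (ξ ⟨s - 1, by omega⟩))
          (S' (ξ ⟨(j : ℕ), lt_of_lt_of_le j.isLt (by omega)⟩)))
    (t : ℕ) (ht1 : 1 < t) (htT : t ≤ T)
    (η : ℝ)
    (hexp : ∀ ξ : Fin T → Fin n, ∀ v v' : EuclideanSpace ℝ (Fin d),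
      ‖(v - (α (t - 1) / ((t : ℝ) - 1)) •
          ∑ j : Fin (t - 1), g v (S (ξ ⟨t - 1, by omega⟩))
            (S (ξ ⟨(j : ℕ), lt_of_lt_of_le j.isLt (by omega)⟩))) -
        (v' - (α (t - 1) / ((t : ℝ) - 1)) •
          ∑ j : Fin (t - 1), g v' (S (ξ ⟨t - 1, by omega⟩))
            (S (ξ ⟨(j : ℕ), lt_of_lt_of_le j.isLt (by omega)⟩)))‖ ≤ η * ‖v - v'‖) :
    (1 / (n : ℝ) ^ T) * ∑ ξ : Fin T → Fin n, ‖w ξ t - w' ξ t‖ ≤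
      ((1 / (n : ℝ)) * min η 1 + (1 - 1 / (n : ℝ)) * η) *
          ((1 / (n : ℝ) ^ T) * ∑ ξ : Fin T → Fin n, ‖w ξ (t - 1) - w' ξ (t - 1)‖)
        + (4 * L / (n : ℝ)) * α (t - 1) := by
  have ht : (0 : ℝ) < (t : ℝ) - 1 := by
    have : (2 : ℝ) ≤ t := by exact_mod_cast ht1
    linarith
  set c := α (t - 1) / ((t : ℝ) - 1) with hc
  set p : Fin T := ⟨t - 1, by omega⟩
  set δ : ℕ → (Fin T → Fin n) → ℝ := fun s ξ => ‖w ξ s - w' ξ s‖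
  set weight : Fin n → ℝ := fun a => if a = i₀ then min η 1 else η
  set visits : (Fin T → Fin n) → ℝ := fun ξ => (if ξ p = i₀ then ((t - 1 : ℕ) : ℝ) else 0) +
    ∑ j : Fin (t - 1), if ξ ⟨j, by omega⟩ = i₀ then 1 else 0
  have hpath : ∀ ξ, δ t ξ ≤ weight (ξ p) * δ (t - 1) ξ + 2 * L * c * visits ξ := fun ξ => by
    simp only [δ, weight, visits]
    rw [hrec ξ t ht1 htT, hrec' ξ t ht1 htT]
    exact norm_pairwiseStep_neighbor_le hL hSS' (div_nonneg (hα _) ht.le) _ _ (hexp ξ) _ _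
  have hδ_update : ∀ ξ i, δ (t - 1) (update ξ p i) = δ (t - 1) ξ := fun ξ i => by
    have hs1 : 1 ≤ t - 1 := by omega
    simp only [δ]
    rw [pairwiseSGD_iterate_update_eq S g α w 0 hw1 hrec hs1 p.isLt,
      pairwiseSGD_iterate_update_eq S' g α w' 0 hw1' hrec' hs1 p.isLt]
  have hweight : (n : ℝ) * ∑ ξ, weight (ξ p) * δ (t - 1) ξ =
      (min η 1 + (n - 1) * η) * ∑ ξ, δ (t - 1) ξ := by
    simpa [weight, sum_ite_eq_add_card_sub_one_mul] using
      card_mul_sum_mul_of_update_eq p weight (δ (t - 1)) hδ_update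
  have hsum : (n : ℝ) * ∑ ξ, δ t ξ ≤
      (min η 1 + (n - 1) * η) * ∑ ξ, δ (t - 1) ξ + 4 * L * α (t - 1) * (n : ℝ) ^ T := calc
    (n : ℝ) * ∑ ξ, δ t ξ ≤ n * ∑ ξ, (weight (ξ p) * δ (t - 1) ξ + 2 * L * c * visits ξ) := by
        gcongr with ξ; exact hpath ξ
    _ = n * ∑ ξ, weight (ξ p) * δ (t - 1) ξ + 2 * L * c * (n * ∑ ξ, visits ξ) := by
        rw [Finset.sum_add_distrib, ← Finset.mul_sum]; ring
    _ = _ := by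
        rw [hweight, card_mul_sum_visits, hc, Nat.cast_sub ht1.le, Nat.cast_one]
        field_simp; ring
  have hn0 : (0 : ℝ) < n := by exact_mod_cast (by omega : 0 < n)
  rw [← mul_le_mul_iff_of_pos_left (by positivity : (0 : ℝ) < n * n ^ T)]
  field_simp
  linarith
end

section
/- Let Z be a measurable space, D a probability measure on Z, n ≥ 2, Ω ⊆ ℝ^d, (Ξ, μ) a probability space modeling the internal randomness of a randomized algorithm A : Z^n × Ξ → ℝ^d (jointly measurable), and ℓ : ℝ^d × Z × Z → ℝ a bounded measurable pairwise loss. Suppose A is ε-random-uniform stable: for all S, S' ∈ Z^n differing in at most one coordinate and all z, z' ∈ Z, ∫_Ξ [ℓ(A(S, ξ), z, z') − ℓ(A(S', ξ), z, z')] dμ(ξ) ≤ ε. Then |∫_Ξ ∫_{Z^n} [R_S(A(S, ξ)) − R(A(S, ξ))] d(D^n)(S) dμ(ξ)| ≤ 2ε, where R(w) = ∫∫ ℓ(w, z, z') dD(z) dD(z') is the population risk and R_S(w) = (2/(n(n−1)))·Σ_{1 ≤ i < j ≤ n} ℓ(w, S_i, S_j) is the empirical risk. -/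
/-! The empirical risk is the average over the pairs `i < j` of `ℓ(A S, S i, S j)`, so it suffices
to bound the gap `E[ℓ(A S, S i, S j) - R(A S)]` of a single pair by `2ε`. Replacing `S i` and `S j`
by fresh independent points `z, z'` does not change the law of the sample, so this gap equals
`E[ℓ(A S', z, z') - ℓ(A S, z, z')]`, where `S'` is `S` with `z, z'` written into positions `i, j`.
For fixed `S, z, z'` the samples `S` and `S'` are joined by two neighbouring steps, so stability
bounds the expectation over the internal randomness by `2ε`, pointwise. -/

open MeasureTheory

/-- The empirical pairwise risk `R_S(w) = (2/(n(n−1)))·Σ_{i<j} ℓ(w, S_i, S_j)`. -/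
noncomputable def empRisk {Z : Type*} {d n : ℕ}
    (ℓ : EuclideanSpace ℝ (Fin d) → Z → Z → ℝ) (S : Fin n → Z)
    (v : EuclideanSpace ℝ (Fin d)) : ℝ :=
  (2 / ((n : ℝ) * ((n : ℝ) - 1))) * ∑ i : Fin n, ∑ j ∈ Finset.Ioi i, ℓ v (S i) (S j)

/-- The population pairwise risk `R(w) = E_{(z,z') ∼ D×D}[ℓ(w, z, z')]`. -/
noncomputable def popRisk {Z : Type*} [MeasurableSpace Z] {d : ℕ}
    (ℓ : EuclideanSpace ℝ (Fin d) → Z → Z → ℝ) (D : Measure Z)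
    (v : EuclideanSpace ℝ (Fin d)) : ℝ :=
  ∫ z, ∫ z', ℓ v z z' ∂D ∂D

open Function Finset
open scoped BigOperators

theorem Measurable.comp₃ {α β γ δ : Type*} [MeasurableSpace α] [MeasurableSpace β]
    [MeasurableSpace γ] [MeasurableSpace δ] {f : β → γ → δ → ℝ}
    (hf : Measurable fun p : β × γ × δ => f p.1 p.2.1 p.2.2) {u : α → β} {v : α → γ} {w : α → δ}
    (hu : Measurable u) (hv : Measurable v) (hw : Measurable w) :
    Measurable fun x => f (u x) (v x) (w x) :=
  hf.comp (hu.prodMk (hv.prodMk hw))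

theorem integrable_comp₃_of_abs_le {α β γ δ : Type*} [MeasurableSpace α] [MeasurableSpace β]
    [MeasurableSpace γ] [MeasurableSpace δ] {μ : Measure α} [IsFiniteMeasure μ]
    {f : β → γ → δ → ℝ} (hf : Measurable fun p : β × γ × δ => f p.1 p.2.1 p.2.2) {C : ℝ}
    (hC : ∀ x y z, |f x y z| ≤ C) {u : α → β} {v : α → γ} {w : α → δ}
    (hu : Measurable u) (hv : Measurable v) (hw : Measurable w) :
    Integrable (fun x => f (u x) (v x) (w x)) μ :=
  .of_bound (hf.comp₃ hu hv hw).aestronglyMeasurable C (ae_of_all _ fun _ => hC _ _ _)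

section UpdateCoordinates

variable {ι : Type*} [Fintype ι] [DecidableEq ι] {α : ι → Type*} [∀ i, MeasurableSpace (α i)]
  (μ : (i : ι) → Measure (α i)) [∀ i, IsProbabilityMeasure (μ i)]

theorem measurePreserving_update (i : ι) :
    MeasurePreserving (fun p : (Π k, α k) × α i => update p.1 i p.2)
      ((Measure.pi μ).prod (μ i)) (Measure.pi μ) := by
  refine ⟨measurable_update', (Measure.pi_eq fun s hs => ?_).symm⟩
  have hpre : (fun p : (Π k, α k) × α i => update p.1 i p.2) ⁻¹' Set.univ.pi s
      = Set.univ.pi (update s i Set.univ) ×ˢ s i := by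
    ext ⟨S, z⟩
    simp only [Set.mem_preimage, Set.mem_prod, Set.mem_univ_pi]
    rw [forall_update_iff (p := fun k (x : α k) => x ∈ s k),
      forall_update_iff (p := fun k t => S k ∈ t)]
    simp [and_comm]
  rw [Measure.map_apply measurable_update' (.univ_pi hs), hpre, Measure.prod_prod, Measure.pi_pi,
    ← prod_erase_mul _ _ (mem_univ i), ← prod_erase_mul _ _ (mem_univ i),
    update_self, measure_univ, mul_one]
  congr 1
  exact prod_congr rfl fun k hk => by rw [update_of_ne (ne_of_mem_erase hk)]

theorem measurePreserving_update_update (i j : ι) :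
    MeasurePreserving (fun p : (Π k, α k) × α i × α j => update (update p.1 i p.2.1) j p.2.2)
      ((Measure.pi μ).prod ((μ i).prod (μ j))) (Measure.pi μ) :=
  (measurePreserving_update μ j).comp <|
    ((measurePreserving_update μ i).prod (.id (μ j))).comp <|
      (measurePreserving_prodAssoc _ _ _).symm MeasurableEquiv.prodAssoc

end UpdateCoordinates

theorem integral_comp_update_update {ι Z : Type*} [Fintype ι] [DecidableEq ι] [MeasurableSpace Z]
    (D : Measure Z) [IsProbabilityMeasure D] {i j : ι} (hij : i ≠ j) {f : (ι → Z) → Z → Z → ℝ}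
    (hf : AEStronglyMeasurable (fun S => f S (S i) (S j)) (Measure.pi fun _ => D)) :
    ∫ S, f S (S i) (S j) ∂Measure.pi (fun _ => D) =
      ∫ p, f (update (update p.1 i p.2.1) j p.2.2) p.2.1 p.2.2
        ∂(Measure.pi fun _ => D).prod (D.prod D) := by
  have h := measurePreserving_update_update (fun _ : ι => D) i j
  have key := integral_map h.measurable.aemeasurable (h.map_eq ▸ hf)
  rw [h.map_eq] at key
  simpa [update_of_ne hij] using key

theorem integral_expect {κ α : Type*} [MeasurableSpace α] {μ : Measure α} (s : Finset κ)
    {f : κ → α → ℝ} (hf : ∀ k ∈ s, Integrable (f k) μ) :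
    ∫ x, 𝔼 k ∈ s, f k x ∂μ = 𝔼 k ∈ s, ∫ x, f k x ∂μ := by
  simp only [expect_eq_sum_div_card, integral_div, integral_finsetSum s hf]

theorem integral_integral_expect {κ α β : Type*} [MeasurableSpace α] [MeasurableSpace β]
    {μ : Measure α} {ν : Measure β} [SFinite μ] [SFinite ν] (s : Finset κ)
    {f : κ → α → β → ℝ} (hf : ∀ k ∈ s, Integrable (uncurry (f k)) (μ.prod ν)) :
    ∫ x, ∫ y, 𝔼 k ∈ s, f k x y ∂ν ∂μ = 𝔼 k ∈ s, ∫ x, ∫ y, f k x y ∂ν ∂μ := by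
  have hsum : Integrable (fun z : α × β => 𝔼 k ∈ s, f k z.1 z.2) (μ.prod ν) := by
    simp only [expect_eq_sum_div_card]
    exact (integrable_finsetSum s hf).div_const _
  rw [← integral_prod _ hsum, integral_expect s (f := fun k (z : α × β) => f k z.1 z.2) hf]
  exact expect_congr rfl fun k hk => integral_prod _ (hf k hk)

theorem card_sigma_Ioi (n : ℕ) :
    ((univ.sigma fun i : Fin n => Ioi i).card : ℝ) = n * (n - 1) / 2 := by
  have h : (univ.sigma fun i : Fin n => Ioi i).card * 2 = n * (n - 1) := by
    simp only [card_sigma, Fin.card_Ioi]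
    rw [Fin.sum_univ_eq_sum_range (fun m => n - 1 - m) n, sum_range_reflect (fun m => m) n,
      sum_range_id_mul_two]
  rcases n with _ | n
  · simp
  · rw [Nat.add_sub_cancel] at h
    rw [eq_div_iff two_ne_zero, Nat.cast_succ, add_sub_cancel_right]
    exact_mod_cast h

theorem empRisk_eq_expect {Z : Type*} {d n : ℕ} (ℓ : EuclideanSpace ℝ (Fin d) → Z → Z → ℝ)
    (S : Fin n → Z) (v : EuclideanSpace ℝ (Fin d)) :
    empRisk ℓ S v = 𝔼 p ∈ univ.sigma (fun i : Fin n => Ioi i), ℓ v (S p.1) (S p.2) := by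
  rw [empRisk, sum_sigma', expect_eq_sum_div_card, card_sigma_Ioi, div_div_eq_mul_div]
  ring

section PopulationRisk

variable {ι Z : Type*} [Fintype ι] [DecidableEq ι] [MeasurableSpace Z] {d : ℕ}
  {ℓ : EuclideanSpace ℝ (Fin d) → Z → Z → ℝ} {D : Measure Z} [IsProbabilityMeasure D] {C : ℝ}

theorem popRisk_eq_integral_prod
    (hℓ : Measurable fun p : EuclideanSpace ℝ (Fin d) × Z × Z => ℓ p.1 p.2.1 p.2.2)
    (hC : ∀ v z z', |ℓ v z z'| ≤ C) (v : EuclideanSpace ℝ (Fin d)) :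
    popRisk ℓ D v = ∫ q, ℓ v q.1 q.2 ∂D.prod D :=
  (integral_prod (fun q : Z × Z => ℓ v q.1 q.2)
    (integrable_comp₃_of_abs_le hℓ hC measurable_const measurable_fst measurable_snd)).symm

theorem measurable_popRisk
    (hℓ : Measurable fun p : EuclideanSpace ℝ (Fin d) × Z × Z => ℓ p.1 p.2.1 p.2.2)
    (hC : ∀ v z z', |ℓ v z z'| ≤ C) : Measurable (popRisk ℓ D) := by
  rw [funext (popRisk_eq_integral_prod hℓ hC)]
  exact hℓ.stronglyMeasurable.integral_prod_right'.measurable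

theorem abs_popRisk_le
    (hℓ : Measurable fun p : EuclideanSpace ℝ (Fin d) × Z × Z => ℓ p.1 p.2.1 p.2.2)
    (hC : ∀ v z z', |ℓ v z z'| ≤ C) (v : EuclideanSpace ℝ (Fin d)) : |popRisk ℓ D v| ≤ C := by
  simpa [popRisk_eq_integral_prod hℓ hC] using
    norm_integral_le_of_norm_le_const (μ := D.prod D) (f := fun q : Z × Z => ℓ v q.1 q.2)
      (ae_of_all _ fun q => hC v q.1 q.2)

theorem integrable_popRisk_comp
    (hℓ : Measurable fun p : EuclideanSpace ℝ (Fin d) × Z × Z => ℓ p.1 p.2.1 p.2.2)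
    (hC : ∀ v z z', |ℓ v z z'| ≤ C) {X : Type*} [MeasurableSpace X] {P : Measure X}
    [IsFiniteMeasure P] {B : X → EuclideanSpace ℝ (Fin d)} (hB : Measurable B) :
    Integrable (fun x => popRisk ℓ D (B x)) P :=
  .of_bound ((measurable_popRisk hℓ hC).comp hB).aestronglyMeasurable C
    (ae_of_all _ fun _ => abs_popRisk_le hℓ hC _)

theorem integral_popRisk_comp
    (hℓ : Measurable fun p : EuclideanSpace ℝ (Fin d) × Z × Z => ℓ p.1 p.2.1 p.2.2)
    (hC : ∀ v z z', |ℓ v z z'| ≤ C) {X : Type*} [MeasurableSpace X] {P : Measure X}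
    [IsFiniteMeasure P] {B : X → EuclideanSpace ℝ (Fin d)} (hB : Measurable B) :
    ∫ x, popRisk ℓ D (B x) ∂P = ∫ p, ℓ (B p.1) p.2.1 p.2.2 ∂P.prod (D.prod D) := by
  rw [integral_prod (fun p : X × Z × Z => ℓ (B p.1) p.2.1 p.2.2)
    (integrable_comp₃_of_abs_le hℓ hC (by fun_prop) (by fun_prop) (by fun_prop))]
  simp_rw [popRisk_eq_integral_prod hℓ hC]

theorem integral_loss_sub_popRisk_eq
    (hℓ : Measurable fun p : EuclideanSpace ℝ (Fin d) × Z × Z => ℓ p.1 p.2.1 p.2.2)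
    (hC : ∀ v z z', |ℓ v z z'| ≤ C) {B : (ι → Z) → EuclideanSpace ℝ (Fin d)} (hB : Measurable B)
    {i j : ι} (hij : i ≠ j) :
    ∫ S, (ℓ (B S) (S i) (S j) - popRisk ℓ D (B S)) ∂Measure.pi (fun _ => D) =
      ∫ p, (ℓ (B (update (update p.1 i p.2.1) j p.2.2)) p.2.1 p.2.2 - ℓ (B p.1) p.2.1 p.2.2)
        ∂(Measure.pi fun _ => D).prod (D.prod D) := by
  rw [integral_sub (integrable_comp₃_of_abs_le hℓ hC hB (by fun_prop) (by fun_prop))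
      (integrable_popRisk_comp hℓ hC hB),
    integral_sub (integrable_comp₃_of_abs_le hℓ hC (by fun_prop) (by fun_prop) (by fun_prop))
      (integrable_comp₃_of_abs_le hℓ hC (by fun_prop) (by fun_prop) (by fun_prop)),
    integral_comp_update_update D hij
      (hℓ.comp₃ hB (measurable_pi_apply i) (measurable_pi_apply j)).aestronglyMeasurable,
    integral_popRisk_comp hℓ hC hB]

end PopulationRisk

def IsRandomUniformStable {ι W Z Ξ : Type*} [MeasurableSpace Ξ] (μ : Measure Ξ)
    (A : (ι → Z) → Ξ → W) (ℓ : W → Z → Z → ℝ) (ε : ℝ) : Prop :=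
  ∀ S S' : ι → Z, (∃ i₀, ∀ i, i ≠ i₀ → S i = S' i) → ∀ z z' : Z,
    ∫ ξ, (ℓ (A S ξ) z z' - ℓ (A S' ξ) z z') ∂μ ≤ ε

namespace IsRandomUniformStable

variable {ι W Z Ξ : Type*} [DecidableEq ι] [MeasurableSpace Ξ] {μ : Measure Ξ}
  {A : (ι → Z) → Ξ → W} {ℓ : W → Z → Z → ℝ} {ε : ℝ}

theorem abs_integral_sub_update_le (h : IsRandomUniformStable μ A ℓ ε) (S : ι → Z) (i : ι)
    (a z z' : Z) : |∫ ξ, (ℓ (A (update S i a) ξ) z z' - ℓ (A S ξ) z z') ∂μ| ≤ ε := by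
  have hne : ∀ k, k ≠ i → update S i a k = S k := fun k hk => update_of_ne hk a S
  have h₁ := h _ _ ⟨i, hne⟩ z z'
  have h₂ := h _ _ ⟨i, fun k hk => (hne k hk).symm⟩ z z'
  have hswap : ∫ ξ, (ℓ (A S ξ) z z' - ℓ (A (update S i a) ξ) z z') ∂μ
      = -∫ ξ, (ℓ (A (update S i a) ξ) z z' - ℓ (A S ξ) z z') ∂μ := by
    rw [← integral_neg]
    simp_rw [neg_sub]
  exact abs_le.2 ⟨by linarith, h₁⟩

theorem abs_integral_sub_update_update_le (h : IsRandomUniformStable μ A ℓ ε) {z z' : Z}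
    (hint : ∀ T, Integrable (fun ξ => ℓ (A T ξ) z z') μ) (S : ι → Z) (i j : ι) (a b : Z) :
    |∫ ξ, (ℓ (A (update (update S i a) j b) ξ) z z' - ℓ (A S ξ) z z') ∂μ| ≤ 2 * ε := by
  set S₁ := update S i a
  calc _ = |(∫ ξ, (ℓ (A (update S₁ j b) ξ) z z' - ℓ (A S₁ ξ) z z') ∂μ)
        + ∫ ξ, (ℓ (A S₁ ξ) z z' - ℓ (A S ξ) z z') ∂μ| := by
        rw [integral_sub (hint _) (hint _), integral_sub (hint _) (hint _),
          integral_sub (hint _) (hint _), sub_add_sub_cancel]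
    _ ≤ ε + ε := (abs_add_le _ _).trans <| add_le_add
        (h.abs_integral_sub_update_le S₁ j b z z') (h.abs_integral_sub_update_le S i a z z')
    _ = 2 * ε := (two_mul ε).symm

end IsRandomUniformStable

theorem IsRandomUniformStable.abs_integral_integral_loss_sub_popRisk_le {ι Z Ξ : Type*}
    [Fintype ι] [DecidableEq ι] [MeasurableSpace Z] [MeasurableSpace Ξ] {d : ℕ}
    {ℓ : EuclideanSpace ℝ (Fin d) → Z → Z → ℝ} {D : Measure Z} [IsProbabilityMeasure D] {C : ℝ}
    {μ : Measure Ξ} [IsProbabilityMeasure μ] {A : (ι → Z) → Ξ → EuclideanSpace ℝ (Fin d)} {ε : ℝ}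
    (h : IsRandomUniformStable μ A ℓ ε) (hA : Measurable fun p : (ι → Z) × Ξ => A p.1 p.2)
    (hℓ : Measurable fun p : EuclideanSpace ℝ (Fin d) × Z × Z => ℓ p.1 p.2.1 p.2.2)
    (hC : ∀ v z z', |ℓ v z z'| ≤ C) {i j : ι} (hij : i ≠ j) :
    |∫ ξ, ∫ S, (ℓ (A S ξ) (S i) (S j) - popRisk ℓ D (A S ξ)) ∂Measure.pi (fun _ => D) ∂μ|
      ≤ 2 * ε := by
  have hint : Integrable (uncurry fun ξ (p : (ι → Z) × Z × Z) =>
      ℓ (A (update (update p.1 i p.2.1) j p.2.2) ξ) p.2.1 p.2.2 - ℓ (A p.1 ξ) p.2.1 p.2.2)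
      (μ.prod ((Measure.pi fun _ => D).prod (D.prod D))) :=
    (integrable_comp₃_of_abs_le hℓ hC (by fun_prop) (by fun_prop) (by fun_prop)).sub
      (integrable_comp₃_of_abs_le hℓ hC (by fun_prop) (by fun_prop) (by fun_prop))
  rw [integral_congr_ae (ae_of_all _ fun ξ =>
      integral_loss_sub_popRisk_eq hℓ hC (B := fun S => A S ξ) (by fun_prop) hij),
    integral_integral_swap hint, ← Real.norm_eq_abs]
  refine (norm_integral_le_of_norm_le_const (C := 2 * ε) (ae_of_all _ fun p => ?_)).trans_eq ?_
  · exact h.abs_integral_sub_update_update_le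
      (fun T => integrable_comp₃_of_abs_le hℓ hC (by fun_prop) measurable_const measurable_const)
      p.1 i j p.2.1 p.2.2
  · simp

theorem stability_implies_generalization_pairwise_general
    {Z : Type*} [MeasurableSpace Z] (D : Measure Z) [IsProbabilityMeasure D]
    (n d : ℕ) (hn : 2 ≤ n)
    {Ξ : Type*} [MeasurableSpace Ξ] (μ : Measure Ξ) [IsProbabilityMeasure μ]
    (A : (Fin n → Z) → Ξ → EuclideanSpace ℝ (Fin d))
    (hA : Measurable fun p : (Fin n → Z) × Ξ => A p.1 p.2)
    (ℓ : EuclideanSpace ℝ (Fin d) → Z → Z → ℝ)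
    (hmeas : Measurable fun p : EuclideanSpace ℝ (Fin d) × Z × Z => ℓ p.1 p.2.1 p.2.2)
    (C : ℝ) (hbound : ∀ v z z', |ℓ v z z'| ≤ C)
    (ε : ℝ)
    (hstab : ∀ S S' : Fin n → Z, (∃ i₀, ∀ i, i ≠ i₀ → S i = S' i) → ∀ z z' : Z,
      ∫ ξ, (ℓ (A S ξ) z z' - ℓ (A S' ξ) z z') ∂μ ≤ ε) :
    |∫ ξ, ∫ S, (empRisk ℓ S (A S ξ) - popRisk ℓ D (A S ξ))
        ∂(Measure.pi fun _ : Fin n => D) ∂μ| ≤ 2 * ε := by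
  set pairs := univ.sigma fun i : Fin n => Ioi i
  have hpairs : pairs.Nonempty := ⟨⟨⟨0, by omega⟩, ⟨1, by omega⟩⟩, by simp [pairs]⟩
  have hgap : ∀ ξ S, empRisk ℓ S (A S ξ) - popRisk ℓ D (A S ξ) =
      𝔼 p ∈ pairs, (ℓ (A S ξ) (S p.1) (S p.2) - popRisk ℓ D (A S ξ)) := fun ξ S => by
    rw [expect_sub_distrib, expect_const hpairs, empRisk_eq_expect]
  simp_rw [hgap]
  rw [integral_integral_expect pairs fun p _ =>
    (integrable_comp₃_of_abs_le hmeas hbound (by fun_prop) (by fun_prop) (by fun_prop)).sub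
      (integrable_popRisk_comp hmeas hbound (by fun_prop))]
  refine (abs_expect_le _ _).trans (expect_le hpairs fun p hp => ?_)
  exact IsRandomUniformStable.abs_integral_integral_loss_sub_popRisk_le hstab hA hmeas hbound
    (mem_Ioi.1 (mem_sigma.1 hp).2).ne

/-- **Theorem 2.** If the randomized algorithm `A` is `ε`-random-uniform stable for the bounded
measurable pairwise loss `ℓ`, then the expected generalization error is bounded by `2ε`. -/
theorem stability_implies_generalization_pairwise
    {Z : Type*} [MeasurableSpace Z] (D : Measure Z) [IsProbabilityMeasure D]
    (n d : ℕ) (hn : 2 ≤ n)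
    (Ω : Set (EuclideanSpace ℝ (Fin d)))
    {Ξ : Type*} [MeasurableSpace Ξ] (μ : Measure Ξ) [IsProbabilityMeasure μ]
    (A : (Fin n → Z) → Ξ → EuclideanSpace ℝ (Fin d))
    (hA : Measurable fun p : (Fin n → Z) × Ξ => A p.1 p.2)
    (ℓ : EuclideanSpace ℝ (Fin d) → Z → Z → ℝ)
    (hmeas : Measurable fun p : EuclideanSpace ℝ (Fin d) × Z × Z => ℓ p.1 p.2.1 p.2.2)
    (C : ℝ) (hbound : ∀ v z z', |ℓ v z z'| ≤ C)
    (ε : ℝ)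
    (hstab : ∀ S S' : Fin n → Z, (∃ i₀, ∀ i, i ≠ i₀ → S i = S' i) → ∀ z z' : Z,
      ∫ ξ, (ℓ (A S ξ) z z' - ℓ (A S' ξ) z z') ∂μ ≤ ε) :
    |∫ ξ, ∫ S, (empRisk ℓ S (A S ξ) - popRisk ℓ D (A S ξ))
        ∂(Measure.pi fun _ : Fin n => D) ∂μ| ≤ 2 * ε :=
  stability_implies_generalization_pairwise_general D n d hn μ A hA ℓ hmeas C hbound ε hstab
end

section
/- Let Z be a type, d ≥ 1, and ℓ : ℝ^d → Z → Z → ℝ a nonnegative pairwise loss, differentiable in its first argument with ‖∇ℓ(w, z, z')‖ ≤ L for all w, z, z', and with ρ = sup_{w,z,z'} ℓ(w, z, z') < ∞. Let S, S' : Fin n → Z agree at all indices except possibly at a single index i₀ (n ≥ 2), let α_t ≥ 0 be step sizes, and for each path ξ : Fin T → Fin n let w_T(ξ), w'_T(ξ) denote the SGD iterates for pairwise learning at step T based on S, S', with δ_T(ξ) = ‖w_T(ξ) − w'_T(ξ)‖. For t₀ ∈ {2,…,min(n,T)}, let E_{t₀} = {ξ : ξ_t ≠ i₀ for all 1 ≤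 t ≤ t₀} (on E_{t₀} the first t₀ iterates based on S and S' coincide). Then, under the random selection rule, for all z, z' ∈ Z: (1/n^T)·Σ_{ξ} |ℓ(w_T(ξ), z, z') − ℓ(w'_T(ξ), z, z')| ≤ (t₀/n)·ρ + L·(Σ_{ξ ∈ E_{t₀}} δ_T(ξ)) / card(E_{t₀}). -/
/-!
Split the average over paths according to the event `E`. Off `E` the loss difference is at most
`ρ` (the loss takes values in `[0, ρ]`), and a union bound over the first `t₀` steps shows that a
uniformly random path leaves `E` with probability at most `t₀ / n`. On `E` the bounded gradient
makes the loss `L`-Lipschitz, so these paths contribute at most `L · Σ_{ξ ∈ E} δ_T(ξ) / n^T`,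
which is at most the conditional mean `L · Σ_{ξ ∈ E} δ_T(ξ) / card E`.
-/

open Finset

theorem abs_sub_le_of_hasGradientAt_of_norm_le {F : Type*} [NormedAddCommGroup F]
    [InnerProductSpace ℝ F] [CompleteSpace F] {f : F → ℝ} {f' : F → F} {L : ℝ}
    (hf : ∀ x, HasGradientAt f (f' x) x) (hL : ∀ x, ‖f' x‖ ≤ L) (x y : F) :
    |f x - f y| ≤ L * ‖x - y‖ := by
  simpa [Real.norm_eq_abs] using convex_univ.norm_image_sub_le_of_norm_hasFDerivWithin_le
    (fun x _ => (hf x).hasFDerivAt.hasFDerivWithinAt)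
    (fun x _ => by rw [LinearIsometryEquiv.norm_map]; exact hL x) (Set.mem_univ y)
    (Set.mem_univ x)

section Counting

variable {ι α : Type*} [Fintype ι] [DecidableEq ι] [Fintype α] [DecidableEq α]

theorem card_filter_apply_eq_mul_card (i : ι) (a : α) :
    #{f : ι → α | f i = a} * Fintype.card α = Fintype.card α ^ Fintype.card ι := by
  rw [← Fintype.piFinset_univ, Fintype.card_filter_piFinset_const_eq_of_mem _ i (mem_univ a),
    card_univ, ← pow_succ, Nat.sub_add_cancel (Fintype.card_pos_iff.2 ⟨i⟩)]

theorem card_mul_card_le_of_forall_exists_apply_eq {B : Finset (ι → α)} {K : Finset ι} {a : α}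
    (hB : ∀ f ∈ B, ∃ i ∈ K, f i = a) :
    #B * Fintype.card α ≤ #K * Fintype.card α ^ Fintype.card ι := by
  have hunion : B ⊆ K.biUnion fun i => {f : ι → α | f i = a} := by
    intro f hf; simpa using hB f hf
  calc #B * Fintype.card α
      ≤ (∑ i ∈ K, #{f : ι → α | f i = a}) * Fintype.card α := by
        gcongr; exact (card_le_card hunion).trans card_biUnion_le
    _ = #K * Fintype.card α ^ Fintype.card ι := by
        simp only [sum_mul, card_filter_apply_eq_mul_card, sum_const, smul_eq_mul]

theorem card_div_card_pow_le_of_forall_exists_apply_eq [Nonempty α] {B : Finset (ι → α)}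
    {K : Finset ι} {a : α} (hB : ∀ f ∈ B, ∃ i ∈ K, f i = a) :
    (#B : ℝ) / Fintype.card α ^ Fintype.card ι ≤ #K / Fintype.card α := by
  rw [div_le_div_iff₀ (by positivity) (by positivity)]
  exact_mod_cast card_mul_card_le_of_forall_exists_apply_eq hB

end Counting

theorem sum_div_card_le_of_le_mul_on_of_le_on_compl {Ω : Type*} [Fintype Ω] [DecidableEq Ω]
    (E : Finset Ω) {φ δ : Ω → ℝ} {L ρ : ℝ} (hφ : ∀ x ∈ E, 0 ≤ φ x)
    (hE : ∀ x ∈ E, φ x ≤ L * δ x) (hEc : ∀ x ∉ E, φ x ≤ ρ) :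
    (∑ x, φ x) / Fintype.card Ω ≤ #Eᶜ / Fintype.card Ω * ρ + L * (∑ x ∈ E, δ x) / #E := by
  have hon : ∑ x ∈ E, φ x ≤ L * ∑ x ∈ E, δ x := by
    rw [mul_sum]; exact sum_le_sum hE
  have hoff : ∑ x ∈ Eᶜ, φ x ≤ #Eᶜ * ρ := by
    simpa using sum_le_sum fun x hx => hEc x (mem_compl.1 hx)
  have hcond : L * (∑ x ∈ E, δ x) / Fintype.card Ω ≤ L * (∑ x ∈ E, δ x) / #E := by
    rcases E.eq_empty_or_nonempty with rfl | hne
    · simp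
    · exact div_le_div_of_nonneg_left ((sum_nonneg hφ).trans hon) (by simpa using hne)
        (mod_cast card_le_univ E)
  calc (∑ x, φ x) / Fintype.card Ω
      = (∑ x ∈ E, φ x) / Fintype.card Ω + (∑ x ∈ Eᶜ, φ x) / Fintype.card Ω := by
        rw [← sum_add_sum_compl E, add_div]
    _ ≤ L * (∑ x ∈ E, δ x) / Fintype.card Ω + #Eᶜ * ρ / Fintype.card Ω := by gcongr
    _ ≤ #Eᶜ / Fintype.card Ω * ρ + L * (∑ x ∈ E, δ x) / #E := by
        rw [div_mul_eq_mul_div, add_comm]; gcongr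

theorem pairwise_sgd_burn_in_bound
    {Z : Type*} (d : ℕ) (n T : ℕ) (hn : 2 ≤ n)
    (ℓ : EuclideanSpace ℝ (Fin d) → Z → Z → ℝ)
    (hnonneg : ∀ (v : EuclideanSpace ℝ (Fin d)) (z z' : Z), 0 ≤ ℓ v z z')
    (g : EuclideanSpace ℝ (Fin d) → Z → Z → EuclideanSpace ℝ (Fin d)) (L ρ : ℝ)
    (hdiff : ∀ (v : EuclideanSpace ℝ (Fin d)) (z z' : Z),
      HasGradientAt (fun u => ℓ u z z') (g v z z') v)
    (hL : ∀ (v : EuclideanSpace ℝ (Fin d)) (z z' : Z), ‖g v z z'‖ ≤ L)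
    (hρ : ∀ (v : EuclideanSpace ℝ (Fin d)) (z z' : Z), ℓ v z z' ≤ ρ)
    (i₀ : Fin n)
    (w w' : (Fin T → Fin n) → ℕ → EuclideanSpace ℝ (Fin d))
    (t₀ : ℕ) :
    ∀ z z' : Z,
      (1 / (n : ℝ) ^ T) * ∑ ξ : Fin T → Fin n, |ℓ (w ξ T) z z' - ℓ (w' ξ T) z z'| ≤
        ((t₀ : ℝ) / (n : ℝ)) * ρ +
          L * (∑ ξ ∈ Finset.univ.filter
                  (fun ξ : Fin T → Fin n => ∀ s : Fin T, (s : ℕ) < t₀ → ξ s ≠ i₀),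
                ‖w ξ T - w' ξ T‖) /
            ((Finset.univ.filter
                (fun ξ : Fin T → Fin n => ∀ s : Fin T, (s : ℕ) < t₀ → ξ s ≠ i₀)).card : ℝ) := by
  intro z z'
  set E : Finset (Fin T → Fin n) := {ξ | ∀ s : Fin T, (s : ℕ) < t₀ → ξ s ≠ i₀}
  have : Nonempty (Fin n) := ⟨⟨0, by omega⟩⟩
  have hρ0 : 0 ≤ ρ := (hnonneg 0 z z').trans (hρ 0 z z')
  have hleave : (#Eᶜ : ℝ) / (n : ℝ) ^ T ≤ t₀ / n := by
    have hEc : ∀ ξ ∈ Eᶜ, ∃ s ∈ ({s | (s : ℕ) < t₀} : Finset (Fin T)), ξ s = i₀ := by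
      intro ξ hξ; simpa [E] using hξ
    calc (#Eᶜ : ℝ) / (n : ℝ) ^ T ≤ (#{s : Fin T | (s : ℕ) < t₀} : ℝ) / n := by
          simpa only [Fintype.card_fin] using card_div_card_pow_le_of_forall_exists_apply_eq hEc
      _ ≤ t₀ / n := by
          gcongr; exact_mod_cast Fin.card_filter_val_lt.trans_le (min_le_right _ _)
  have haverage := sum_div_card_le_of_le_mul_on_of_le_on_compl E
    (φ := fun ξ => |ℓ (w ξ T) z z' - ℓ (w' ξ T) z z'|) (δ := fun ξ => ‖w ξ T - w' ξ T‖)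
    (fun _ _ => abs_nonneg _)
    (fun _ _ => abs_sub_le_of_hasGradientAt_of_norm_le (hdiff · z z') (hL · z z') _ _)
    (fun _ _ => abs_sub_le_of_nonneg_of_le (hnonneg _ z z') (hρ _ z z') (hnonneg _ z z')
      (hρ _ z z'))
  simp only [Fintype.card_fun, Fintype.card_fin, Nat.cast_pow] at haverage
  rw [one_div_mul_eq_div]
  exact haverage.trans (add_le_add_left (mul_le_mul_of_nonneg_right hleave hρ0) _)
end

section
/- Fix B₁ > 0 and μ > 0 and let r₀ = √(2/μ). For z = (x, y) and z' = (x', y') with x, x' ∈ ℝ^d, ‖x‖ ≤ B₁, ‖x'‖ ≤ B₁ and y, y' ∈ {−1, +1}, define the AUC maximization loss ℓ(w, z, z') = (1 − ⟨x − x', w⟩)²·𝟙[y = 1 and y' = −1] + (μ/2)·‖w‖² for w ∈ ℝ^d. Then: (i) w ↦ ℓ(w, z, z') is μ-strongly convex on ℝ^d; (ii) w ↦ ℓ(w, z, z') is differentiable and its gradient is (8B₁² + μ)-Lipschitz on ℝ^d; and (iii) restricted to the closed ball {w : ‖w‖ ≤ r₀}, w ↦ ℓ(w, z, z') is (4B₁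 + 8B₁²·√(2/μ) + √(2μ))-Lipschitz. -/
/-! With `a = x - x'` and `c ∈ {0, 1}` the label indicator, `ℓ w = c (1 - ⟪a, w⟫)² + μ/2 ‖w‖²`.
Removing `μ/2 ‖w‖²` leaves a convex quadratic. The gradient `2c (⟪a, w⟫ - 1) a + μ w` is affine
in `w` with linear part of norm at most `2‖a‖² + μ ≤ 8B₁² + μ`. On the ball of radius `r₀` it is
bounded by `2‖a‖ (‖a‖ r₀ + 1) + μ r₀`, and the mean value theorem turns this into the Lipschitz
constant, since `μ r₀ = √(2μ)`. -/

open Set Metric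
open scoped RealInnerProductSpace

variable {E : Type*} [NormedAddCommGroup E] [InnerProductSpace ℝ E]

noncomputable def regLeastSquaresLoss (a : E) (c μ : ℝ) (w : E) : ℝ :=
  c * (1 - ⟪a, w⟫) ^ 2 + μ / 2 * ‖w‖ ^ 2

noncomputable def regLeastSquaresLossGrad (a : E) (c μ : ℝ) (w : E) : E :=
  (2 * c * (⟪a, w⟫ - 1)) • a + μ • w

lemma convexOn_sq_one_sub_inner (a : E) : ConvexOn ℝ univ fun w : E => (1 - ⟪a, w⟫) ^ 2 := by
  have := ((even_two.convexOn_pow (𝕜 := ℝ)).translate_right 1).comp_linearMap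
    (-innerₛₗ ℝ a)
  simpa [Function.comp_def, sub_eq_add_neg] using this

lemma strongConvexOn_regLeastSquaresLoss (a : E) {c : ℝ} (hc : 0 ≤ c) (μ : ℝ) :
    StrongConvexOn univ μ (regLeastSquaresLoss a c μ) :=
  strongConvexOn_iff_convex.mpr <| by
    simpa [regLeastSquaresLoss] using (convexOn_sq_one_sub_inner a).smul hc

lemma hasGradientAt_regLeastSquaresLoss [CompleteSpace E] (a : E) (c μ : ℝ) (w : E) :
    HasGradientAt (regLeastSquaresLoss a c μ) (regLeastSquaresLossGrad a c μ w) w := by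
  have hlin : HasFDerivAt (fun w : E => 1 - ⟪a, w⟫) (-innerSL ℝ a) w :=
    (innerSL ℝ a).hasFDerivAt.const_sub 1
  have h := ((hlin.pow 2).const_mul c).add
    ((hasStrictFDerivAt_norm_sq w).hasFDerivAt.const_mul (μ / 2))
  rw [hasGradientAt_iff_hasFDerivAt]
  refine h.congr_fderiv ?_
  ext v
  simp [regLeastSquaresLossGrad]
  ring

lemma norm_regLeastSquaresLossGrad_sub_le (a : E) (c μ : ℝ) (w v : E) :
    ‖regLeastSquaresLossGrad a c μ w - regLeastSquaresLossGrad a c μ v‖ ≤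
      (2 * |c| * ‖a‖ ^ 2 + |μ|) * ‖w - v‖ := by
  have hdiff : regLeastSquaresLossGrad a c μ w - regLeastSquaresLossGrad a c μ v =
      (2 * c * ⟪a, w - v⟫) • a + μ • (w - v) := by
    simp only [regLeastSquaresLossGrad, inner_sub_right]
    module
  have hinner : |⟪a, w - v⟫| ≤ ‖a‖ * ‖w - v‖ := abs_real_inner_le_norm a (w - v)
  calc _ ≤ |2 * c * ⟪a, w - v⟫| * ‖a‖ + |μ| * ‖w - v‖ := by
        rw [hdiff, ← Real.norm_eq_abs, ← Real.norm_eq_abs, ← norm_smul, ← norm_smul]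
        exact norm_add_le _ _
    _ = 2 * |c| * |⟪a, w - v⟫| * ‖a‖ + |μ| * ‖w - v‖ := by
        rw [abs_mul, abs_mul, abs_two]
    _ ≤ 2 * |c| * (‖a‖ * ‖w - v‖) * ‖a‖ + |μ| * ‖w - v‖ := by gcongr
    _ = (2 * |c| * ‖a‖ ^ 2 + |μ|) * ‖w - v‖ := by ring

lemma norm_regLeastSquaresLossGrad_le (a : E) (c μ : ℝ) {r : ℝ} {w : E} (hw : ‖w‖ ≤ r) :
    ‖regLeastSquaresLossGrad a c μ w‖ ≤ 2 * |c| * ‖a‖ * (‖a‖ * r + 1) + |μ| * r := by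
  have hinner : |⟪a, w⟫ - 1| ≤ ‖a‖ * r + 1 := calc
    |⟪a, w⟫ - 1| ≤ |⟪a, w⟫| + |1| := abs_sub _ _
    _ ≤ ‖a‖ * ‖w‖ + 1 := by rw [abs_one]; gcongr; exact abs_real_inner_le_norm a w
    _ ≤ ‖a‖ * r + 1 := by gcongr
  calc _ ≤ |2 * c * (⟪a, w⟫ - 1)| * ‖a‖ + |μ| * ‖w‖ := by
        rw [regLeastSquaresLossGrad, ← Real.norm_eq_abs, ← Real.norm_eq_abs, ← norm_smul,
          ← norm_smul]
        exact norm_add_le _ _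
    _ = 2 * |c| * |⟪a, w⟫ - 1| * ‖a‖ + |μ| * ‖w‖ := by
        rw [abs_mul, abs_mul, abs_two]
    _ ≤ 2 * |c| * (‖a‖ * r + 1) * ‖a‖ + |μ| * r := by gcongr
    _ = 2 * |c| * ‖a‖ * (‖a‖ * r + 1) + |μ| * r := by ring

lemma abs_regLeastSquaresLoss_sub_le [CompleteSpace E] (a : E) (c μ : ℝ) {r : ℝ} {w v : E}
    (hw : w ∈ closedBall (0 : E) r) (hv : v ∈ closedBall (0 : E) r) :
    |regLeastSquaresLoss a c μ w - regLeastSquaresLoss a c μ v| ≤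
      (2 * |c| * ‖a‖ * (‖a‖ * r + 1) + |μ| * r) * ‖w - v‖ := by
  rw [← Real.norm_eq_abs]
  refine (convex_closedBall 0 r).norm_image_sub_le_of_norm_hasFDerivWithin_le (𝕜 := ℝ)
    (fun u _ => ((hasGradientAt_regLeastSquaresLoss a c μ u).hasFDerivAt).hasFDerivWithinAt)
    (fun u hu => ?_) hv hw
  rw [LinearIsometryEquiv.norm_map]
  exact norm_regLeastSquaresLossGrad_le a c μ (mem_closedBall_zero_iff.mp hu)

theorem auc_loss_properties_general
    {d : ℕ} (B₁ μ : ℝ) (hμ : 0 < μ)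
    (x x' : EuclideanSpace ℝ (Fin d)) (y y' : ℝ)
    (hx : ‖x‖ ≤ B₁) (hx' : ‖x'‖ ≤ B₁)
    (ℓ : EuclideanSpace ℝ (Fin d) → ℝ)
    (hℓ : ∀ w, ℓ w =
      (1 - ⟪x - x', w⟫) ^ 2 * (if y = 1 ∧ y' = -1 then 1 else 0) + μ / 2 * ‖w‖ ^ 2) :
    ConvexOn ℝ Set.univ (fun w => ℓ w - μ / 2 * ‖w‖ ^ 2) ∧
      (∃ g : EuclideanSpace ℝ (Fin d) → EuclideanSpace ℝ (Fin d),
        (∀ w, HasGradientAt ℓ (g w) w) ∧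
          ∀ w v, ‖g w - g v‖ ≤ (8 * B₁ ^ 2 + μ) * ‖w - v‖) ∧
      ∀ w ∈ Metric.closedBall (0 : EuclideanSpace ℝ (Fin d)) (Real.sqrt (2 / μ)),
        ∀ v ∈ Metric.closedBall (0 : EuclideanSpace ℝ (Fin d)) (Real.sqrt (2 / μ)),
          |ℓ w - ℓ v| ≤
            (4 * B₁ + 8 * B₁ ^ 2 * Real.sqrt (2 / μ) + Real.sqrt (2 * μ)) * ‖w - v‖ := by
  set c : ℝ := if y = 1 ∧ y' = -1 then 1 else 0 with hc_def
  have hc : 0 ≤ c ∧ |c| ≤ 1 := by rw [hc_def]; split_ifs <;> norm_num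
  have hB₁ : 0 ≤ B₁ := (norm_nonneg x).trans hx
  have ha : ‖x - x'‖ ≤ 2 * B₁ := (norm_sub_le x x').trans (by linarith)
  obtain rfl : ℓ = regLeastSquaresLoss (x - x') c μ :=
    funext fun w => (hℓ w).trans (by rw [regLeastSquaresLoss]; ring)
  have hμr : |μ| * √(2 / μ) = √(2 * μ) := by
    rw [abs_of_pos hμ, show 2 * μ = μ ^ 2 * (2 / μ) by field_simp,
      Real.sqrt_mul (sq_nonneg μ), Real.sqrt_sq hμ.le]
  have hK : 2 * |c| * ‖x - x'‖ ^ 2 + |μ| ≤ 8 * B₁ ^ 2 + μ := calc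
    _ ≤ 2 * 1 * (2 * B₁) ^ 2 + μ := by rw [abs_of_pos hμ]; gcongr; exact hc.2
    _ = 8 * B₁ ^ 2 + μ := by ring
  have hL : 2 * |c| * ‖x - x'‖ * (‖x - x'‖ * √(2 / μ) + 1) + |μ| * √(2 / μ) ≤
      4 * B₁ + 8 * B₁ ^ 2 * √(2 / μ) + √(2 * μ) := calc
    _ ≤ 2 * 1 * (2 * B₁) * (2 * B₁ * √(2 / μ) + 1) + √(2 * μ) := by
        rw [hμr]; gcongr; exact hc.2
    _ = 4 * B₁ + 8 * B₁ ^ 2 * √(2 / μ) + √(2 * μ) := by ring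
  refine ⟨strongConvexOn_iff_convex.mp (strongConvexOn_regLeastSquaresLoss _ hc.1 μ),
    ⟨_, hasGradientAt_regLeastSquaresLoss _ c μ, fun w v => ?_⟩, fun w hw v hv => ?_⟩
  · exact (norm_regLeastSquaresLossGrad_sub_le _ c μ w v).trans
      (mul_le_mul_of_nonneg_right hK (norm_nonneg _))
  · exact (abs_regLeastSquaresLoss_sub_le _ c μ hw hv).trans
      (mul_le_mul_of_nonneg_right hL (norm_nonneg _))

/-- **Corollary 20 (AUC maximization loss properties).** The AUC maximization loss
`ℓ(w) = (1 − ⟪x − x', w⟫)²·𝟙[y = 1 ∧ y' = −1] + (μ/2)‖w‖²` is `μ`-strongly convex,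
`(8B₁² + μ)`-smooth, and `(4B₁ + 8B₁²√(2/μ) + √(2μ))`-Lipschitz on the ball of radius
`r₀ = √(2/μ)`. -/
theorem auc_loss_properties
    {d : ℕ} (B₁ μ : ℝ) (hB₁ : 0 < B₁) (hμ : 0 < μ)
    (x x' : EuclideanSpace ℝ (Fin d)) (y y' : ℝ)
    (hx : ‖x‖ ≤ B₁) (hx' : ‖x'‖ ≤ B₁)
    (hy : y = 1 ∨ y = -1) (hy' : y' = 1 ∨ y' = -1)
    (ℓ : EuclideanSpace ℝ (Fin d) → ℝ)
    (hℓ : ∀ w, ℓ w =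
      (1 - ⟪x - x', w⟫) ^ 2 * (if y = 1 ∧ y' = -1 then 1 else 0) + μ / 2 * ‖w‖ ^ 2) :
    ConvexOn ℝ Set.univ (fun w => ℓ w - μ / 2 * ‖w‖ ^ 2) ∧
      (∃ g : EuclideanSpace ℝ (Fin d) → EuclideanSpace ℝ (Fin d),
        (∀ w, HasGradientAt ℓ (g w) w) ∧
          ∀ w v, ‖g w - g v‖ ≤ (8 * B₁ ^ 2 + μ) * ‖w - v‖) ∧
      ∀ w ∈ Metric.closedBall (0 : EuclideanSpace ℝ (Fin d)) (Real.sqrt (2 / μ)),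
        ∀ v ∈ Metric.closedBall (0 : EuclideanSpace ℝ (Fin d)) (Real.sqrt (2 / μ)),
          |ℓ w - ℓ v| ≤
            (4 * B₁ + 8 * B₁ ^ 2 * Real.sqrt (2 / μ) + Real.sqrt (2 * μ)) * ‖w - v‖ :=
  auc_loss_properties_general B₁ μ hμ x x' y y' hx hx' ℓ hℓ
end

section
/- Fix B₁ > 0, B₂ > 0, r₀ > 0 and h > 0. For z = (x, y) and z' = (x', y') with x, x' ∈ ℝ^d, ‖x‖ ≤ B₁, ‖x'‖ ≤ B₁, |y| ≤ B₂, |y'| ≤ B₂, define the minimum error entropy (MEE) loss ℓ(w, z, z') = 1 − exp(−((y − y') − ⟨x − x', w⟩)² / (2h²)) for w ∈ ℝ^d. Let L = (4/h²)·(B₁²·r₀ + B₁·B₂) and β = (4/h²)·B₁² + (16/h⁴)·(B₁²·r₀ + B₁·B₂)². Then, on the closed ball Ω = {w ∈ ℝ^d : ‖w‖ ≤ r₀}: (i) ℓ(·, z, z') takes values in [0, 1); (ii) w ↦ ℓ(w, z, z') is L-Lipschitz on Ω; and (iii) w ↦ ℓ(w, z, z') is differentiable and its gradient is β-Lipschitz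 on Ω. -/
open scoped RealInnerProductSpace

open Real

/-!
Write `ℓ(w) = φ(a - ⟪u, w⟫)` with `u = x - x'`, `a = y - y'` and the scalar profile
`φ(s) = 1 - exp(-s² / (2h²))`. On the ball of radius `r₀` the residual `s = a - ⟪u, w⟫` stays in
`[-T, T]` with `T = 2B₂ + 2B₁r₀`, and on that interval `|φ'(s)| ≤ T / h²` and
`|φ''(s)| ≤ 1 / h² + T² / h⁴` because `exp(-s² / (2h²)) ≤ 1`. The mean value theorem turns these
into Lipschitz bounds for `φ` and `φ'`, and composing with `w ↦ a - ⟪u, w⟫`, which is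
`‖u‖`-Lipschitz with `‖u‖ ≤ 2B₁`, gives the constants `L` and `β`, the gradient being
`-φ'(a - ⟪u, w⟫) • u`.
-/

noncomputable def meeLoss (h s : ℝ) : ℝ := 1 - exp (-s ^ 2 / (2 * h ^ 2))

noncomputable def meeLossDeriv (h s : ℝ) : ℝ := s / h ^ 2 * exp (-s ^ 2 / (2 * h ^ 2))

noncomputable def meeLossDeriv2 (h s : ℝ) : ℝ :=
  exp (-s ^ 2 / (2 * h ^ 2)) * (1 / h ^ 2 - s ^ 2 / h ^ 4)

lemma exp_neg_sq_div_le_one (h s : ℝ) : exp (-s ^ 2 / (2 * h ^ 2)) ≤ 1 :=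
  exp_le_one_iff.2 (div_nonpos_of_nonpos_of_nonneg (neg_nonpos.2 (sq_nonneg s)) (by positivity))

lemma meeLoss_mem_Ico (h s : ℝ) : meeLoss h s ∈ Set.Ico 0 1 :=
  ⟨sub_nonneg.2 (exp_neg_sq_div_le_one h s), sub_lt_self 1 (exp_pos _)⟩

lemma hasDerivAt_exp_neg_sq_div (h s : ℝ) :
    HasDerivAt (fun s => exp (-s ^ 2 / (2 * h ^ 2)))
      (-(s / h ^ 2) * exp (-s ^ 2 / (2 * h ^ 2))) s :=
  (((hasDerivAt_pow 2 s).fun_neg.div_const (2 * h ^ 2)).exp).congr_deriv (by push_cast; ring)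

lemma hasDerivAt_meeLoss (h s : ℝ) : HasDerivAt (meeLoss h) (meeLossDeriv h s) s :=
  ((hasDerivAt_exp_neg_sq_div h s).const_sub 1).congr_deriv (by rw [meeLossDeriv]; ring)

lemma hasDerivAt_meeLossDeriv (h s : ℝ) : HasDerivAt (meeLossDeriv h) (meeLossDeriv2 h s) s :=
  (((hasDerivAt_id s).div_const (h ^ 2)).mul (hasDerivAt_exp_neg_sq_div h s)).congr_deriv
    (by rw [meeLossDeriv2, id]; ring)

lemma abs_meeLossDeriv_le {h s T : ℝ} (hs : |s| ≤ T) : |meeLossDeriv h s| ≤ T / h ^ 2 := by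
  rw [meeLossDeriv, abs_mul, abs_div, abs_of_nonneg (sq_nonneg h), abs_of_pos (exp_pos _)]
  have hT : 0 ≤ T / h ^ 2 := div_nonneg ((abs_nonneg s).trans hs) (sq_nonneg h)
  calc |s| / h ^ 2 * exp (-s ^ 2 / (2 * h ^ 2)) ≤ T / h ^ 2 * 1 := by
        gcongr
        exact exp_neg_sq_div_le_one h s
    _ = T / h ^ 2 := mul_one _

lemma abs_meeLossDeriv2_le {h s T : ℝ} (hs : |s| ≤ T) :
    |meeLossDeriv2 h s| ≤ 1 / h ^ 2 + T ^ 2 / h ^ 4 := by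
  rw [meeLossDeriv2, abs_mul, abs_of_pos (exp_pos _)]
  have hsT : s ^ 2 ≤ T ^ 2 := sq_le_sq' (abs_le.1 hs).1 (abs_le.1 hs).2
  have hpoly : |1 / h ^ 2 - s ^ 2 / h ^ 4| ≤ 1 / h ^ 2 + T ^ 2 / h ^ 4 := by
    rw [abs_le]
    constructor
    · have : s ^ 2 / h ^ 4 ≤ T ^ 2 / h ^ 4 := by gcongr
      linarith [show 0 ≤ 1 / h ^ 2 by positivity]
    · linarith [show 0 ≤ s ^ 2 / h ^ 4 by positivity, show 0 ≤ T ^ 2 / h ^ 4 by positivity]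
  calc exp (-s ^ 2 / (2 * h ^ 2)) * |1 / h ^ 2 - s ^ 2 / h ^ 4|
      ≤ 1 * (1 / h ^ 2 + T ^ 2 / h ^ 4) :=
        mul_le_mul (exp_neg_sq_div_le_one h s) hpoly (abs_nonneg _) zero_le_one
    _ = 1 / h ^ 2 + T ^ 2 / h ^ 4 := one_mul _

lemma abs_sub_le_of_abs_deriv_le {f f' : ℝ → ℝ} {C T s t : ℝ}
    (hf : ∀ s, HasDerivAt f (f' s) s) (hf' : ∀ s, |s| ≤ T → |f' s| ≤ C)
    (hs : |s| ≤ T) (ht : |t| ≤ T) : |f s - f t| ≤ C * |s - t| := by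
  simpa only [Real.norm_eq_abs] using
    (convex_Icc (-T) T).norm_image_sub_le_of_norm_hasDerivWithin_le
      (fun r _ => (hf r).hasDerivWithinAt) (fun r hr => hf' r (abs_le.2 hr))
      (abs_le.1 ht) (abs_le.1 hs)

section Residual

variable {E : Type*} [NormedAddCommGroup E] [InnerProductSpace ℝ E]

lemma abs_sub_inner_le {a A U r : ℝ} {u w : E} (ha : |a| ≤ A) (hu : ‖u‖ ≤ U) (hw : ‖w‖ ≤ r) :
    |a - ⟪u, w⟫| ≤ A + U * r :=
  calc |a - ⟪u, w⟫| ≤ |a| + |⟪u, w⟫| := abs_sub _ _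
    _ ≤ A + ‖u‖ * ‖w‖ := add_le_add ha (abs_real_inner_le_norm u w)
    _ ≤ A + U * r := by gcongr; exact (norm_nonneg u).trans hu

lemma abs_sub_inner_sub_sub_inner_le (a : ℝ) (u w v : E) :
    |(a - ⟪u, w⟫) - (a - ⟪u, v⟫)| ≤ ‖u‖ * ‖w - v‖ := by
  rw [sub_sub_sub_cancel_left, abs_sub_comm, ← inner_sub_right]
  exact abs_real_inner_le_norm u (w - v)

lemma abs_comp_sub_inner_sub_le {f f' : ℝ → ℝ} {C a A U r : ℝ} {u w v : E}
    (hf : ∀ s, HasDerivAt f (f' s) s) (hf' : ∀ s, |s| ≤ A + U * r → |f' s| ≤ C)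
    (ha : |a| ≤ A) (hu : ‖u‖ ≤ U) (hw : ‖w‖ ≤ r) (hv : ‖v‖ ≤ r) :
    |f (a - ⟪u, w⟫) - f (a - ⟪u, v⟫)| ≤ C * U * ‖w - v‖ := by
  have hw' := abs_sub_inner_le ha hu hw
  have hC : 0 ≤ C := (abs_nonneg _).trans (hf' _ hw')
  calc |f (a - ⟪u, w⟫) - f (a - ⟪u, v⟫)| ≤ C * |(a - ⟪u, w⟫) - (a - ⟪u, v⟫)| :=
        abs_sub_le_of_abs_deriv_le hf hf' hw' (abs_sub_inner_le ha hu hv)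
    _ ≤ C * (‖u‖ * ‖w - v‖) := by gcongr; exact abs_sub_inner_sub_sub_inner_le a u w v
    _ ≤ C * U * ‖w - v‖ := by rw [mul_assoc]; gcongr

lemma abs_meeLoss_sub_inner_sub_le (h : ℝ) {a A U r : ℝ} {u w v : E}
    (ha : |a| ≤ A) (hu : ‖u‖ ≤ U) (hw : ‖w‖ ≤ r) (hv : ‖v‖ ≤ r) :
    |meeLoss h (a - ⟪u, w⟫) - meeLoss h (a - ⟪u, v⟫)| ≤ (A + U * r) / h ^ 2 * U * ‖w - v‖ :=
  abs_comp_sub_inner_sub_le (hasDerivAt_meeLoss h) (fun _ => abs_meeLossDeriv_le) ha hu hw hv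

lemma norm_meeLossDeriv_smul_sub_le (h : ℝ) {a A U r : ℝ} {u w v : E}
    (ha : |a| ≤ A) (hu : ‖u‖ ≤ U) (hw : ‖w‖ ≤ r) (hv : ‖v‖ ≤ r) :
    ‖meeLossDeriv h (a - ⟪u, w⟫) • u - meeLossDeriv h (a - ⟪u, v⟫) • u‖ ≤
      (1 / h ^ 2 + (A + U * r) ^ 2 / h ^ 4) * U ^ 2 * ‖w - v‖ := by
  set K := 1 / h ^ 2 + (A + U * r) ^ 2 / h ^ 4
  have hK : 0 ≤ K := by positivity
  have hU : 0 ≤ U := (norm_nonneg u).trans hu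
  rw [← sub_smul, norm_smul, Real.norm_eq_abs]
  calc |meeLossDeriv h (a - ⟪u, w⟫) - meeLossDeriv h (a - ⟪u, v⟫)| * ‖u‖
      ≤ K * U * ‖w - v‖ * U := by
        gcongr
        exact abs_comp_sub_inner_sub_le (hasDerivAt_meeLossDeriv h)
          (fun _ => abs_meeLossDeriv2_le) ha hu hw hv
    _ = K * U ^ 2 * ‖w - v‖ := by ring

lemma hasGradientAt_meeLoss_sub_inner [CompleteSpace E] (h a : ℝ) (u w : E) :
    HasGradientAt (fun w => meeLoss h (a - ⟪u, w⟫)) (-(meeLossDeriv h (a - ⟪u, w⟫) • u)) w := by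
  have hres : HasFDerivAt (fun w => a - ⟪u, w⟫) (-innerSL ℝ u) w :=
    (innerSL ℝ u).hasFDerivAt.const_sub a
  rw [hasGradientAt_iff_hasFDerivAt]
  refine ((hasDerivAt_meeLoss h _).comp_hasFDerivAt w hres).congr_fderiv ?_
  ext v
  simp

end Residual

theorem mee_loss_properties_general
    {d : ℕ} (B₁ B₂ r₀ h : ℝ)
    (x x' : EuclideanSpace ℝ (Fin d)) (y y' : ℝ)
    (hx : ‖x‖ ≤ B₁) (hx' : ‖x'‖ ≤ B₁) (hy : |y| ≤ B₂) (hy' : |y'| ≤ B₂)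
    (ℓ : EuclideanSpace ℝ (Fin d) → ℝ)
    (hℓ : ∀ w, ℓ w = 1 - Real.exp (-((y - y') - ⟪x - x', w⟫) ^ 2 / (2 * h ^ 2))) :
    (∀ w ∈ Metric.closedBall (0 : EuclideanSpace ℝ (Fin d)) r₀,
      ℓ w ∈ Set.Ico (0 : ℝ) 1) ∧
      (∀ w ∈ Metric.closedBall (0 : EuclideanSpace ℝ (Fin d)) r₀,
        ∀ v ∈ Metric.closedBall (0 : EuclideanSpace ℝ (Fin d)) r₀,
          |ℓ w - ℓ v| ≤ (4 / h ^ 2 * (B₁ ^ 2 * r₀ + B₁ * B₂)) * ‖w - v‖) ∧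
      ∃ g : EuclideanSpace ℝ (Fin d) → EuclideanSpace ℝ (Fin d),
        (∀ w, HasGradientAt ℓ (g w) w) ∧
          ∀ w ∈ Metric.closedBall (0 : EuclideanSpace ℝ (Fin d)) r₀,
            ∀ v ∈ Metric.closedBall (0 : EuclideanSpace ℝ (Fin d)) r₀,
              ‖g w - g v‖ ≤
                (4 / h ^ 2 * B₁ ^ 2 + 16 / h ^ 4 * (B₁ ^ 2 * r₀ + B₁ * B₂) ^ 2) * ‖w - v‖ := by
  obtain rfl : ℓ = fun w => meeLoss h ((y - y') - ⟪x - x', w⟫) := funext hℓ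
  have hu : ‖x - x'‖ ≤ 2 * B₁ := (norm_sub_le x x').trans (by linarith)
  have ha : |y - y'| ≤ 2 * B₂ := (abs_sub y y').trans (by linarith)
  simp only [mem_closedBall_zero_iff]
  refine ⟨fun w _ => meeLoss_mem_Ico h _, fun w hw v hv => ?_, _,
    fun w => hasGradientAt_meeLoss_sub_inner h _ _ w, fun w hw v hv => ?_⟩
  · exact (abs_meeLoss_sub_inner_sub_le h ha hu hw hv).trans_eq (by ring)
  · rw [neg_sub_neg, norm_sub_rev]
    exact (norm_meeLossDeriv_smul_sub_le h ha hu hw hv).trans_eq (by ring)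

/-- **Corollary 23 (MEE loss properties).** On the ball `Ω = {w : ‖w‖ ≤ r₀}`, the minimum error
entropy loss `ℓ(w) = 1 − exp(−((y − y') − ⟪x − x', w⟫)²/(2h²))` takes values in `[0, 1)`, is
`L`-Lipschitz with `L = (4/h²)(B₁²r₀ + B₁B₂)`, and is differentiable with `β`-Lipschitz
gradient on `Ω`, where `β = (4/h²)B₁² + (16/h⁴)(B₁²r₀ + B₁B₂)²`. -/
theorem mee_loss_properties
    {d : ℕ} (B₁ B₂ r₀ h : ℝ) (hB₁ : 0 < B₁) (hB₂ : 0 < B₂) (hr₀ : 0 < r₀) (hh : 0 < h)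
    (x x' : EuclideanSpace ℝ (Fin d)) (y y' : ℝ)
    (hx : ‖x‖ ≤ B₁) (hx' : ‖x'‖ ≤ B₁) (hy : |y| ≤ B₂) (hy' : |y'| ≤ B₂)
    (ℓ : EuclideanSpace ℝ (Fin d) → ℝ)
    (hℓ : ∀ w, ℓ w = 1 - Real.exp (-((y - y') - ⟪x - x', w⟫) ^ 2 / (2 * h ^ 2))) :
    (∀ w ∈ Metric.closedBall (0 : EuclideanSpace ℝ (Fin d)) r₀,
      ℓ w ∈ Set.Ico (0 : ℝ) 1) ∧
      (∀ w ∈ Metric.closedBall (0 : EuclideanSpace ℝ (Fin d)) r₀,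
        ∀ v ∈ Metric.closedBall (0 : EuclideanSpace ℝ (Fin d)) r₀,
          |ℓ w - ℓ v| ≤ (4 / h ^ 2 * (B₁ ^ 2 * r₀ + B₁ * B₂)) * ‖w - v‖) ∧
      ∃ g : EuclideanSpace ℝ (Fin d) → EuclideanSpace ℝ (Fin d),
        (∀ w, HasGradientAt ℓ (g w) w) ∧
          ∀ w ∈ Metric.closedBall (0 : EuclideanSpace ℝ (Fin d)) r₀,
            ∀ v ∈ Metric.closedBall (0 : EuclideanSpace ℝ (Fin d)) r₀,
              ‖g w - g v‖ ≤
                (4 / h ^ 2 * B₁ ^ 2 + 16 / h ^ 4 * (B₁ ^ 2 * r₀ + B₁ * B₂) ^ 2) * ‖w - v‖ :=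
  mee_loss_properties_general B₁ B₂ r₀ h x x' y y' hx hx' hy hy' ℓ hℓ
end
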